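/- arXiv:1908.01084 — 3 statements merged into one kernel-verified Lean document; each statement's English description precedes it below -/
import Mathlib

section
/- For every integer n ≥ 1, each pair (τ, stat) ∈ {(213, (31-2)), (312, (2-13))}, and all real numbers q, x, t with (1+x)(x+t)(1+xt) ≠ 0, one has Σ_{σ∈S_n(τ)} q^{stat σ} t^{des σ} = ((1+xt)/(1+x))^{n−1} · Σ_{σ∈S_n(τ)} q^{stat σ} · ((1+x)² t/((x+t)(1+xt)))^{val σ} · ((x+t)/(1+xt))^{des σ}. -/
/-!
A permutation avoiding `312` (resp. `213`) is `A' 1 B'` around its minimum, where `A'`, `B'` avoid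
the pattern and `A'` lies entirely below (resp. above) `B'`; conversely every such gluing avoids
it. Under this decomposition `des`, `val` and `2-13` (resp. `31-2`) are additive up to corrections
depending only on the sizes `a`, `b` of the blocks, so the generating function `F_n(y, t)`, with
`y` marking valleys and `t` descents, satisfies `F_{m+1} = ∑_{a+b=m} w(a,b) F_a F_b` with boundary
weights `w(0,m) = 1`, `w(m,0) = t` and interior weights `q^e y t`. By induction,
`F_{m+1}(1, t) = c^m F_{m+1}(y, u)` as soon as `t = c² y u` (for the interior terms) and
`1 + t = c (1 + u)` (for the two boundary terms together), and `c = (1+xt)/(1+x)`,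
`y = (1+x)² t/((x+t)(1+xt))`, `u = (x+t)/(1+xt)` satisfy both.
-/

open Finset

open scoped Classical

noncomputable section

namespace EulerExc

variable {n : ℕ}

/-- 1-based value of `σ` at position `k ∈ [1,n]`, with boundary convention
`σ(0) = σ(n+1) = 0` outside. -/
def sv (σ : Equiv.Perm (Fin n)) (k : ℕ) : ℕ :=
  if h : 1 ≤ k ∧ k ≤ n then ((σ ⟨k - 1, by omega⟩ : Fin n) : ℕ) + 1 else 0

/-- 1-based value with boundary convention `σ(0) = 0`, `σ(n+1) = ∞`. -/
def svInf (σ : Equiv.Perm (Fin n)) (k : ℕ) : ℕ :=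
  if k = 0 then 0 else if k ≤ n then sv σ k else n + 1

/-- number of excedances -/
def exc (σ : Equiv.Perm (Fin n)) : ℕ := (univ.filter fun i : Fin n => i < σ i).card

/-- number of fixed points -/
def fixc (σ : Equiv.Perm (Fin n)) : ℕ := (univ.filter fun i : Fin n => σ i = i).card

/-- number of drops -/
def dropc (σ : Equiv.Perm (Fin n)) : ℕ := (univ.filter fun i : Fin n => σ i < i).card

/-- number of inversions -/
def inv (σ : Equiv.Perm (Fin n)) : ℕ :=
  (univ.filter fun p : Fin n × Fin n => p.1 < p.2 ∧ σ p.2 < σ p.1).card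

/-- number of descents -/
def des (σ : Equiv.Perm (Fin n)) : ℕ :=
  ((Icc 1 (n - 1)).filter fun i => sv σ (i + 1) < sv σ i).card

/-- number of ascents -/
def asc (σ : Equiv.Perm (Fin n)) : ℕ :=
  ((Icc 1 (n - 1)).filter fun i => sv σ i < sv σ (i + 1)).card

/-- crossing number: pairs `(i,j)` with `j < i < σ(j) < σ(i)` or `σ(i) < σ(j) ≤ i < j` -/
def cros (σ : Equiv.Perm (Fin n)) : ℕ :=
  (univ.filter fun p : Fin n × Fin n =>
    (p.2 < p.1 ∧ p.1 < σ p.2 ∧ σ p.2 < σ p.1) ∨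
    (σ p.1 < σ p.2 ∧ σ p.2 ≤ p.1 ∧ p.1 < p.2)).card

/-- nesting number: pairs `(i,j)` with `j < i < σ(i) < σ(j)` or `σ(j) < σ(i) ≤ i < j` -/
def nest (σ : Equiv.Perm (Fin n)) : ℕ :=
  (univ.filter fun p : Fin n × Fin n =>
    (p.2 < p.1 ∧ p.1 < σ p.1 ∧ σ p.1 < σ p.2) ∨
    (σ p.2 < σ p.1 ∧ σ p.1 ≤ p.1 ∧ p.1 < p.2)).card

def icr (σ : Equiv.Perm (Fin n)) : ℕ := cros σ⁻¹

/-- number of cyclic peaks -/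
def cpk (σ : Equiv.Perm (Fin n)) : ℕ :=
  (univ.filter fun x : Fin n => σ⁻¹ x < x ∧ σ x < x).card

/-- number of cyclic valleys -/
def cval (σ : Equiv.Perm (Fin n)) : ℕ :=
  (univ.filter fun x : Fin n => x < σ⁻¹ x ∧ x < σ x).card

/-- number of double excedances -/
def cda (σ : Equiv.Perm (Fin n)) : ℕ :=
  (univ.filter fun x : Fin n => σ⁻¹ x < x ∧ x < σ x).card

/-- number of double drops -/
def cdd (σ : Equiv.Perm (Fin n)) : ℕ :=
  (univ.filter fun x : Fin n => x < σ⁻¹ x ∧ σ x < x).card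

/-- number of cycles (including fixed points) -/
def cyc (σ : Equiv.Perm (Fin n)) : ℕ := σ.cycleType.card + fixc σ

/-- the star companion `σ*` of `σ`: a permutation of `{0,1,…,n}` with
`σ*(0) = n` and `σ*(i) = σ(i) - 1` for `i ∈ [n]`. -/
def star (σ : Equiv.Perm (Fin n)) : Equiv.Perm (Fin (n + 1)) :=
  (Equiv.Perm.decomposeFin.symm (0, σ)).trans (Equiv.subRight (1 : Fin (n + 1)))

def cpkStar (σ : Equiv.Perm (Fin n)) : ℕ :=
  (univ.filter fun i : Fin (n + 1) =>
    1 ≤ (i : ℕ) ∧ (i : ℕ) < n ∧ (star σ)⁻¹ i < i ∧ star σ i < i).card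

def cdaStar (σ : Equiv.Perm (Fin n)) : ℕ :=
  (univ.filter fun i : Fin (n + 1) =>
    1 ≤ (i : ℕ) ∧ (i : ℕ) < n ∧ (star σ)⁻¹ i < i ∧ i < star σ i).card

def cddStar (σ : Equiv.Perm (Fin n)) : ℕ :=
  (univ.filter fun i : Fin (n + 1) =>
    1 ≤ (i : ℕ) ∧ (i : ℕ) < n ∧ i < (star σ)⁻¹ i ∧ star σ i < i).card

def fixStar (σ : Equiv.Perm (Fin n)) : ℕ :=
  (univ.filter fun i : Fin (n + 1) =>
    1 ≤ (i : ℕ) ∧ (i : ℕ) < n ∧ star σ i = i).card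

def cycStar (σ : Equiv.Perm (Fin n)) : ℕ := cyc (star σ)

/-- number of occurrences of the vincular pattern 31-2 -/
def p31_2 (σ : Equiv.Perm (Fin n)) : ℕ :=
  ((Icc 1 n ×ˢ Icc 1 n).filter fun p =>
    p.1 + 1 < p.2 ∧ sv σ (p.1 + 1) < sv σ p.2 ∧ sv σ p.2 < sv σ p.1).card

/-- number of occurrences of the vincular pattern 2-13 -/
def p2_13 (σ : Equiv.Perm (Fin n)) : ℕ :=
  ((Icc 1 n ×ˢ Icc 1 n).filter fun p =>
    p.2 < p.1 ∧ p.1 < n ∧ sv σ p.1 < sv σ p.2 ∧ sv σ p.2 < sv σ (p.1 + 1)).card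

/-- number of occurrences of the vincular pattern 2-31 -/
def p2_31 (σ : Equiv.Perm (Fin n)) : ℕ :=
  ((Icc 1 n ×ˢ Icc 1 n).filter fun p =>
    p.2 < p.1 ∧ p.1 < n ∧ sv σ (p.1 + 1) < sv σ p.2 ∧ sv σ p.2 < sv σ p.1).card

/-- number of peaks (convention 0--0) -/
def pk (σ : Equiv.Perm (Fin n)) : ℕ :=
  ((Icc 1 n).filter fun i => sv σ (i - 1) < sv σ i ∧ sv σ (i + 1) < sv σ i).card

/-- number of valleys (convention 0--0) -/
def vall (σ : Equiv.Perm (Fin n)) : ℕ :=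
  ((Icc 1 n).filter fun i => sv σ i < sv σ (i - 1) ∧ sv σ i < sv σ (i + 1)).card

/-- number of double ascents (convention 0--0) -/
def da (σ : Equiv.Perm (Fin n)) : ℕ :=
  ((Icc 1 n).filter fun i => sv σ (i - 1) < sv σ i ∧ sv σ i < sv σ (i + 1)).card

/-- number of double descents (convention 0--0) -/
def dd (σ : Equiv.Perm (Fin n)) : ℕ :=
  ((Icc 1 n).filter fun i => sv σ i < sv σ (i - 1) ∧ sv σ (i + 1) < sv σ i).card

/-- number of peaks (convention 0--∞) -/
def lpk (σ : Equiv.Perm (Fin n)) : ℕ :=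
  ((Icc 1 n).filter fun i => svInf σ (i - 1) < svInf σ i ∧ svInf σ (i + 1) < svInf σ i).card

/-- number of valleys (convention 0--∞) -/
def lval (σ : Equiv.Perm (Fin n)) : ℕ :=
  ((Icc 1 n).filter fun i => svInf σ i < svInf σ (i - 1) ∧ svInf σ i < svInf σ (i + 1)).card

/-- number of double ascents (convention 0--∞) -/
def lda (σ : Equiv.Perm (Fin n)) : ℕ :=
  ((Icc 1 n).filter fun i => svInf σ (i - 1) < svInf σ i ∧ svInf σ i < svInf σ (i + 1)).card

/-- number of double descents (convention 0--∞) -/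
def ldd (σ : Equiv.Perm (Fin n)) : ℕ :=
  ((Icc 1 n).filter fun i => svInf σ i < svInf σ (i - 1) ∧ svInf σ (i + 1) < svInf σ i).card

/-- number of foremaxima: double ascents (convention 0--∞) that are
left-to-right maxima -/
def fmax (σ : Equiv.Perm (Fin n)) : ℕ :=
  ((Icc 1 n).filter fun i =>
    svInf σ (i - 1) < svInf σ i ∧ svInf σ i < svInf σ (i + 1) ∧
    ∀ j ∈ Icc 1 i, sv σ j ≤ sv σ i).card

/-- `scda σ = #{i ∈ [n-1] : i < σ(i) and i+1 > σ⁻¹(i+1)}` -/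
def scda (σ : Equiv.Perm (Fin n)) : ℕ :=
  ((Icc 1 (n - 1)).filter fun i => i < sv σ i ∧ sv σ⁻¹ (i + 1) < i + 1).card

/-- `σ` avoids the pattern 321 -/
def Avoids321 (σ : Equiv.Perm (Fin n)) : Prop :=
  ¬ ∃ i j k : Fin n, i < j ∧ j < k ∧ σ k < σ j ∧ σ j < σ i

/-- `σ` avoids the pattern 231 -/
def Avoids231 (σ : Equiv.Perm (Fin n)) : Prop :=
  ¬ ∃ i j k : Fin n, i < j ∧ j < k ∧ σ k < σ i ∧ σ i < σ j

/-- `σ` avoids the pattern 312 -/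
def Avoids312 (σ : Equiv.Perm (Fin n)) : Prop :=
  ¬ ∃ i j k : Fin n, i < j ∧ j < k ∧ σ j < σ k ∧ σ k < σ i

/-- `σ` avoids the pattern 213 -/
def Avoids213 (σ : Equiv.Perm (Fin n)) : Prop :=
  ¬ ∃ i j k : Fin n, i < j ∧ j < k ∧ σ j < σ i ∧ σ i < σ k

/-- `σ` avoids the pattern 132 -/
def Avoids132 (σ : Equiv.Perm (Fin n)) : Prop :=
  ¬ ∃ i j k : Fin n, i < j ∧ j < k ∧ σ i < σ k ∧ σ k < σ j

/-- `σ` is a derangement -/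
def IsDerangement (σ : Equiv.Perm (Fin n)) : Prop := ∀ i, σ i ≠ i

/-! Signed permutations `B_n`, encoded as a pair `(σ, ε)` of an ordinary
permutation (the absolute value) together with signs attached to positions. -/

/-- number of negative values -/
def negB (ε : Fin n → Bool) : ℕ := (univ.filter fun i => ε i = true).card

/-- number of type B excedances, w.r.t. the friends order -/
def excB (σ : Equiv.Perm (Fin n)) (ε : Fin n → Bool) : ℕ :=
  (univ.filter fun i : Fin n => i < σ i ∨ (σ i = i ∧ ε i = true)).card

/-- the (1-based, signed, integer) value of the signed permutation `(σ, ε)` at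
position `k ∈ [1,n]`, with `0` outside. -/
def signedVal (σ : Equiv.Perm (Fin n)) (ε : Fin n → Bool) (k : ℕ) : ℤ :=
  if h : 1 ≤ k ∧ k ≤ n then
    (if ε ⟨k - 1, by omega⟩ then -(((σ ⟨k - 1, by omega⟩ : Fin n) : ℕ) + 1 : ℤ)
     else (((σ ⟨k - 1, by omega⟩ : Fin n) : ℕ) + 1 : ℤ))
  else 0

/-- number of type B descents -/
def desB (σ : Equiv.Perm (Fin n)) (ε : Fin n → Bool) : ℕ :=
  ((range n).filter fun i => signedVal σ ε (i + 1) < signedVal σ ε i).card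

section Gluing

variable {a b n : ℕ}

def leftShift (below : Bool) (b : ℕ) : ℕ := if below then 1 else b + 1

def rightShift (below : Bool) (a : ℕ) : ℕ := if below then a + 1 else 1

/-- Positions and values are `0`-based here, unlike in `sv`: `A` fills positions `0, …, a - 1`,
the value `0` sits at position `a`, and `B` fills the positions after it. -/
def glueVal (below : Bool) (A : Equiv.Perm (Fin a)) (B : Equiv.Perm (Fin b)) (i : ℕ) : ℕ :=
  if h : i < a then A ⟨i, h⟩ + leftShift below b
  else if h : a < i ∧ i - (a + 1) < b then B ⟨i - (a + 1), h.2⟩ + rightShift below a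
  else 0

variable (below : Bool) (A : Equiv.Perm (Fin a)) (B : Equiv.Perm (Fin b))

lemma glueVal_of_lt {i : ℕ} (h : i < a) : glueVal below A B i = A ⟨i, h⟩ + leftShift below b := by
  simp [glueVal, h]

lemma glueVal_self : glueVal below A B a = 0 := by
  simp [glueVal]

lemma glueVal_of_gt {i : ℕ} (h : a < i) (h' : i - (a + 1) < b) :
    glueVal below A B i = B ⟨i - (a + 1), h'⟩ + rightShift below a := by
  simp [glueVal, h, h', show ¬ i < a by omega]

lemma glueVal_bounds_of_lt {i : ℕ} (h : i < a) :
    leftShift below b ≤ glueVal below A B i ∧ glueVal below A B i < leftShift below b + a := by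
  rw [glueVal_of_lt below A B h]
  have := (A ⟨i, h⟩).isLt
  omega

lemma glueVal_bounds_of_gt {i : ℕ} (h : a < i) (h' : i - (a + 1) < b) :
    rightShift below a ≤ glueVal below A B i ∧ glueVal below A B i < rightShift below a + b := by
  rw [glueVal_of_gt below A B h h']
  have := (B ⟨_, h'⟩).isLt
  omega

lemma leftShift_rightShift_cases :
    leftShift below b = 1 ∧ rightShift below a = a + 1 ∨
      leftShift below b = b + 1 ∧ rightShift below a = 1 := by
  cases below <;> simp [leftShift, rightShift]

lemma glueVal_injOn (hab : a + 1 + b = n) {i j : ℕ} (hi : i < n) (hj : j < n)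
    (h : glueVal below A B i = glueVal below A B j) : i = j := by
  have := leftShift_rightShift_cases below (a := a) (b := b)
  rcases lt_trichotomy i a with hia | hia | hia <;> rcases lt_trichotomy j a with hja | hja | hja
  · rw [glueVal_of_lt below A B hia, glueVal_of_lt below A B hja] at h
    exact Fin.mk.inj_iff.1 (A.injective (Fin.ext (by omega)))
  · have := glueVal_bounds_of_lt below A B hia
    rw [hja, glueVal_self] at h; omega
  · have := glueVal_bounds_of_lt below A B hia
    have := glueVal_bounds_of_gt below A B hja (by omega)
    omega
  · have := glueVal_bounds_of_lt below A B hja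
    rw [hia, glueVal_self] at h; omega
  · omega
  · have := glueVal_bounds_of_gt below A B hja (by omega)
    rw [hia, glueVal_self] at h; omega
  · have := glueVal_bounds_of_gt below A B hia (by omega)
    have := glueVal_bounds_of_lt below A B hja
    omega
  · have := glueVal_bounds_of_gt below A B hia (by omega)
    rw [hja, glueVal_self] at h; omega
  · rw [glueVal_of_gt below A B hia (by omega), glueVal_of_gt below A B hja (by omega)] at h
    have hB : B ⟨i - (a + 1), by omega⟩ = B ⟨j - (a + 1), by omega⟩ := Fin.ext (by omega)
    have := Fin.mk.inj_iff.1 (B.injective hB)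
    omega

lemma glueVal_lt (hab : a + 1 + b = n) (i : ℕ) : glueVal below A B i < n := by
  have := leftShift_rightShift_cases below (a := a) (b := b)
  by_cases hia : i < a
  · have := glueVal_bounds_of_lt below A B hia; omega
  by_cases h : a < i ∧ i - (a + 1) < b
  · have := glueVal_bounds_of_gt below A B h.1 h.2; omega
  · rw [glueVal, dif_neg hia, dif_neg h]; omega

/-- The permutation `A' 1 B'` of `[a + 1 + b]`, where `A'` and `B'` are the shifts of `A` and `B`
to consecutive value ranges, that of `A'` below that of `B'` iff `below`. -/
def glue (hab : a + 1 + b = n) : Equiv.Perm (Fin n) :=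
  Equiv.ofBijective (fun i => ⟨glueVal below A B i, glueVal_lt below A B hab i⟩)
    (Finite.injective_iff_bijective.1 fun i j hij =>
      Fin.ext (glueVal_injOn below A B hab i.isLt j.isLt (Fin.mk.inj_iff.1 hij)))

lemma glue_apply (hab : a + 1 + b = n) (i : Fin n) :
    (glue below A B hab i : ℕ) = glueVal below A B i := rfl

end Gluing

section Values

variable {n : ℕ}

lemma sv_eq_zero (σ : Equiv.Perm (Fin n)) {k : ℕ} (h : ¬ (1 ≤ k ∧ k ≤ n)) : sv σ k = 0 :=
  dif_neg h

lemma sv_mem (σ : Equiv.Perm (Fin n)) {k : ℕ} (h₁ : 1 ≤ k) (h₂ : k ≤ n) :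
    1 ≤ sv σ k ∧ sv σ k ≤ n := by
  rw [sv, dif_pos ⟨h₁, h₂⟩]
  exact ⟨Nat.le_add_left _ _, (σ _).isLt⟩

variable {a b : ℕ} (below : Bool) (A : Equiv.Perm (Fin a)) (B : Equiv.Perm (Fin b))
  (hab : a + 1 + b = n)

lemma sv_glue_left {k : ℕ} (h₁ : 1 ≤ k) (h₂ : k ≤ a) :
    sv (glue below A B hab) k = sv A k + leftShift below b := by
  rw [sv, sv, dif_pos ⟨h₁, by omega⟩, dif_pos ⟨h₁, h₂⟩, glue_apply, Fin.val_mk,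
    glueVal_of_lt below A B (by omega)]
  omega

lemma sv_glue_min : sv (glue below A B hab) (a + 1) = 1 := by
  rw [sv, dif_pos ⟨by omega, by omega⟩, glue_apply]
  simp [glueVal_self]

lemma sv_glue_right {k : ℕ} (h₁ : 1 ≤ k) (h₂ : k ≤ b) :
    sv (glue below A B hab) (a + 1 + k) = sv B k + rightShift below a := by
  rw [sv, sv, dif_pos ⟨by omega, by omega⟩, dif_pos ⟨h₁, h₂⟩, glue_apply,
    glueVal_of_gt below A B (by simp only; omega) (by simp only; omega)]
  simp only [show a + 1 + k - 1 - (a + 1) = k - 1 by omega]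
  omega

lemma sv_glue_left_cases {k : ℕ} (hk : k ≤ a + 1) :
    (k = 0 ∧ sv A k = 0 ∧ sv (glue below A B hab) k = 0) ∨
      (k = a + 1 ∧ sv A k = 0 ∧ sv (glue below A B hab) k = 1) ∨
      (1 ≤ k ∧ k ≤ a ∧ sv (glue below A B hab) k = sv A k + leftShift below b ∧
        1 ≤ sv A k ∧ sv A k ≤ a) := by
  rcases Nat.eq_zero_or_pos k with rfl | hk₀
  · exact Or.inl ⟨rfl, sv_eq_zero A (by omega), sv_eq_zero _ (by omega)⟩
  rcases hk.eq_or_lt with rfl | hka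
  · exact Or.inr (Or.inl ⟨rfl, sv_eq_zero A (by omega), sv_glue_min below A B hab⟩)
  · exact Or.inr (Or.inr ⟨hk₀, by omega, sv_glue_left below A B hab hk₀ (by omega),
      sv_mem A hk₀ (by omega)⟩)

lemma sv_glue_right_cases {k : ℕ} (hk : k ≤ b + 1) :
    (k = 0 ∧ sv B k = 0 ∧ sv (glue below A B hab) (a + 1 + k) = 1) ∨
      (k = b + 1 ∧ sv B k = 0 ∧ sv (glue below A B hab) (a + 1 + k) = 0) ∨
      (1 ≤ k ∧ k ≤ b ∧ sv (glue below A B hab) (a + 1 + k) = sv B k + rightShift below a ∧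
        1 ≤ sv B k ∧ sv B k ≤ b) := by
  rcases Nat.eq_zero_or_pos k with rfl | hk₀
  · exact Or.inl ⟨rfl, sv_eq_zero B (by omega), sv_glue_min below A B hab⟩
  rcases hk.eq_or_lt with rfl | hkb
  · exact Or.inr (Or.inl ⟨rfl, sv_eq_zero B (by omega), sv_eq_zero _ (by omega)⟩)
  · exact Or.inr (Or.inr ⟨hk₀, by omega, sv_glue_right below A B hab hk₀ (by omega),
      sv_mem B hk₀ (by omega)⟩)

/-- The minimum at position `a + 1` plays the role of the boundary value `0` of `A` there. -/
lemma sv_glue_lt_iff_left {i j : ℕ} (hi : i ≤ a + 1) (hj : j ≤ a + 1)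
    (h : (1 ≤ i ∧ i ≤ a) ∨ (1 ≤ j ∧ j ≤ a)) :
    sv (glue below A B hab) i < sv (glue below A B hab) j ↔ sv A i < sv A j := by
  have := leftShift_rightShift_cases below (a := a) (b := b)
  rcases sv_glue_left_cases below A B hab hi with hi' | hi' | hi' <;>
    rcases sv_glue_left_cases below A B hab hj with hj' | hj' | hj' <;> omega

lemma sv_glue_lt_iff_right {i j : ℕ} (hi : i ≤ b + 1) (hj : j ≤ b + 1)
    (h : (1 ≤ i ∧ i ≤ b) ∨ (1 ≤ j ∧ j ≤ b)) :
    sv (glue below A B hab) (a + 1 + i) < sv (glue below A B hab) (a + 1 + j) ↔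
      sv B i < sv B j := by
  have := leftShift_rightShift_cases below (a := a) (b := b)
  rcases sv_glue_right_cases below A B hab hi with hi' | hi' | hi' <;>
    rcases sv_glue_right_cases below A B hab hj with hj' | hj' | hj' <;> omega

end Values

lemma sum_Icc_one_add_one_add {M : Type*} [AddCommMonoid M] (f : ℕ → M) (a b : ℕ) :
    ∑ i ∈ Icc 1 (a + 1 + b), f i =
      ∑ i ∈ Icc 1 a, f i + f (a + 1) + ∑ j ∈ Icc 1 b, f (a + 1 + j) := by
  induction b with
  | zero => simp [Finset.sum_Icc_succ_top]
  | succ b ih =>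
    rw [← add_assoc, Finset.sum_Icc_succ_top (by omega), ih, Finset.sum_Icc_succ_top (by omega),
      add_assoc _ (∑ j ∈ Icc 1 b, _)]
    rfl

lemma sum_Icc_one_add_one_add_of_right_eq_zero {M : Type*} [AddCommMonoid M] {f : ℕ → M}
    {a : ℕ} (b : ℕ) (h : ∀ j, a < j → f j = 0) :
    ∑ i ∈ Icc 1 (a + 1 + b), f i = ∑ i ∈ Icc 1 a, f i := by
  rw [sum_Icc_one_add_one_add, h (a + 1) (by omega), sum_eq_zero fun j _ => h (a + 1 + j) (by omega),
    add_zero, add_zero]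

lemma sum_Icc_one_add_one_add_of_left_eq_zero {M : Type*} [AddCommMonoid M] {f : ℕ → M}
    {a : ℕ} (b : ℕ) (h : ∀ j, j ≤ a + 1 → f j = 0) :
    ∑ i ∈ Icc 1 (a + 1 + b), f i = ∑ j ∈ Icc 1 b, f (a + 1 + j) := by
  rw [sum_Icc_one_add_one_add, h _ le_rfl, sum_eq_zero fun j hj => h _ (by rw [mem_Icc] at hj; omega),
    zero_add, zero_add]

section Statistics

variable {a b n : ℕ}

/-- Counting `n` as a descent too (the boundary value `σ(n + 1) = 0` is below everything). -/
lemma sum_Icc_descent (σ : Equiv.Perm (Fin n)) :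
    ∑ i ∈ Icc 1 n, (if sv σ (i + 1) < sv σ i then 1 else 0) = des σ + if n = 0 then 0 else 1 := by
  rw [des, card_filter]
  cases n with
  | zero => simp
  | succ m =>
    rw [Finset.sum_Icc_succ_top (by omega), if_pos, if_neg (by omega), Nat.add_sub_cancel]
    rw [sv_eq_zero σ (by omega)]
    exact (sv_mem σ (by omega) le_rfl).1

variable (below : Bool) (A : Equiv.Perm (Fin a)) (B : Equiv.Perm (Fin b)) (hab : a + 1 + b = n)

lemma des_glue : des (glue below A B hab) = des A + des B + if a = 0 then 0 else 1 := by
  subst hab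
  have hB₁ := sv_glue_right_cases below A B rfl (k := 1) (by omega)
  set σ := glue below A B rfl
  have h := sum_Icc_descent σ
  rw [sum_Icc_one_add_one_add] at h
  have hA : ∑ i ∈ Icc 1 a, (if sv σ (i + 1) < sv σ i then 1 else 0) =
      ∑ i ∈ Icc 1 a, if sv A (i + 1) < sv A i then 1 else 0 :=
    sum_congr rfl fun i hi => by
      rw [mem_Icc] at hi
      exact if_congr (sv_glue_lt_iff_left below A B rfl (by omega) (by omega) (by omega)) rfl rfl
  have hB : ∑ j ∈ Icc 1 b, (if sv σ (a + 1 + j + 1) < sv σ (a + 1 + j) then 1 else 0) =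
      ∑ j ∈ Icc 1 b, if sv B (j + 1) < sv B j then 1 else 0 :=
    sum_congr rfl fun j hj => by
      rw [mem_Icc] at hj
      exact if_congr (sv_glue_lt_iff_right below A B rfl (i := j + 1) (by omega) (by omega)
        (by omega)) rfl rfl
  have hmin : (if sv σ (a + 1 + 1) < sv σ (a + 1) then 1 else 0) = if b = 0 then 1 else 0 := by
    rw [sv_glue_min]
    split_ifs <;> omega
  rw [hA, hB, hmin, sum_Icc_descent A, sum_Icc_descent B] at h
  split_ifs at h ⊢ <;> omega

lemma vall_glue :
    vall (glue below A B hab) = vall A + vall B + if a = 0 ∨ b = 0 then 0 else 1 := by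
  subst hab
  have hAa := sv_glue_left_cases below A B rfl (k := a) (by omega)
  have hB₁ := sv_glue_right_cases below A B rfl (k := 1) (by omega)
  set σ := glue below A B rfl
  simp only [vall, card_filter]
  rw [sum_Icc_one_add_one_add]
  have hA : ∑ i ∈ Icc 1 a,
      (if sv σ i < sv σ (i - 1) ∧ sv σ i < sv σ (i + 1) then 1 else 0) =
      ∑ i ∈ Icc 1 a, if sv A i < sv A (i - 1) ∧ sv A i < sv A (i + 1) then 1 else 0 :=
    sum_congr rfl fun i hi => by
      rw [mem_Icc] at hi
      exact if_congr (and_congr (sv_glue_lt_iff_left below A B rfl (by omega) (by omega) (by omega))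
        (sv_glue_lt_iff_left below A B rfl (j := i + 1) (by omega) (by omega) (by omega))) rfl rfl
  have hB : ∑ j ∈ Icc 1 b, (if sv σ (a + 1 + j) < sv σ (a + 1 + j - 1) ∧
      sv σ (a + 1 + j) < sv σ (a + 1 + j + 1) then 1 else 0) =
      ∑ j ∈ Icc 1 b, if sv B j < sv B (j - 1) ∧ sv B j < sv B (j + 1) then 1 else 0 :=
    sum_congr rfl fun j hj => by
      rw [mem_Icc] at hj
      rw [show a + 1 + j - 1 = a + 1 + (j - 1) by omega]
      exact if_congr (and_congr
        (sv_glue_lt_iff_right below A B rfl (j := j - 1) (by omega) (by omega) (by omega))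
        (sv_glue_lt_iff_right below A B rfl (j := j + 1) (by omega) (by omega) (by omega))) rfl rfl
  have hmin : (if sv σ (a + 1) < sv σ (a + 1 - 1) ∧ sv σ (a + 1) < sv σ (a + 1 + 1)
      then 1 else 0) = if a = 0 ∨ b = 0 then 0 else 1 := by
    have := leftShift_rightShift_cases below (a := a) (b := b)
    rw [sv_glue_min, Nat.add_sub_cancel]
    split_ifs <;> omega
  rw [hA, hB, hmin]
  ring

/-- A new occurrence `j < i` of `2-13` uses the minimum at `i = a + 1` and any position `j` of
the (lower) left block, provided the right block is nonempty. -/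
lemma p2_13_glue_true :
    p2_13 (glue true A B hab) = p2_13 A + p2_13 B + if a = 0 ∨ b = 0 then 0 else a := by
  subst hab
  have hL k (hk : k ≤ a + 1) := sv_glue_left_cases true A B rfl hk
  have hR k (hk : k ≤ b + 1) := sv_glue_right_cases true A B rfl hk
  simp only [leftShift, rightShift, if_true] at hL hR
  set σ := glue true A B rfl
  simp only [p2_13, card_filter, sum_product]
  rw [sum_Icc_one_add_one_add]
  have rowA : ∑ i ∈ Icc 1 a, ∑ j ∈ Icc 1 (a + 1 + b), (if j < i ∧ i < a + 1 + b ∧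
      sv σ i < sv σ j ∧ sv σ j < sv σ (i + 1) then 1 else 0) =
      ∑ i ∈ Icc 1 a, ∑ j ∈ Icc 1 a,
        if j < i ∧ i < a ∧ sv A i < sv A j ∧ sv A j < sv A (i + 1) then 1 else 0 := by
    refine sum_congr rfl fun i hi => ?_
    rw [mem_Icc] at hi
    rw [sum_Icc_one_add_one_add_of_right_eq_zero b fun j hj => if_neg (by omega)]
    refine sum_congr rfl fun j hj => if_congr ?_ rfl rfl
    rw [mem_Icc] at hj
    have := hL i (by omega); have := hL j (by omega); have := hL (i + 1) (by omega)
    omega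
  have rowMin : ∑ j ∈ Icc 1 (a + 1 + b), (if j < a + 1 ∧ a + 1 < a + 1 + b ∧
      sv σ (a + 1) < sv σ j ∧ sv σ j < sv σ (a + 1 + 1) then 1 else 0) =
      if a = 0 ∨ b = 0 then 0 else a := by
    rw [sum_Icc_one_add_one_add_of_right_eq_zero b fun j hj => if_neg (by omega)]
    have := hL (a + 1) le_rfl; have := hR 1 (by omega)
    rcases Nat.eq_zero_or_pos b with rfl | hb
    · simp
    rw [sum_congr rfl fun j hj => if_pos (by rw [mem_Icc] at hj; have := hL j (by omega); omega)]
    simp only [sum_const, Nat.card_Icc, smul_eq_mul, mul_one]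
    split_ifs <;> omega
  have rowB : ∑ k ∈ Icc 1 b, ∑ j ∈ Icc 1 (a + 1 + b), (if j < a + 1 + k ∧ a + 1 + k < a + 1 + b ∧
      sv σ (a + 1 + k) < sv σ j ∧ sv σ j < sv σ (a + 1 + k + 1) then 1 else 0) =
      ∑ k ∈ Icc 1 b, ∑ l ∈ Icc 1 b,
        if l < k ∧ k < b ∧ sv B k < sv B l ∧ sv B l < sv B (k + 1) then 1 else 0 := by
    refine sum_congr rfl fun k hk => ?_
    rw [mem_Icc] at hk
    have := hR k (by omega); have := hR (k + 1) (by omega); rw [← add_assoc] at this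
    rw [sum_Icc_one_add_one_add_of_left_eq_zero b fun j hj => if_neg ?_]
    · refine sum_congr rfl fun l hl => if_congr ?_ rfl rfl
      rw [mem_Icc] at hl
      have := hR l (by omega)
      omega
    · have := hL j hj
      omega
  rw [rowA, rowMin, rowB]
  ring

/-- A new occurrence `i + 1 < j` of `31-2` uses the last position `i = a` of the (upper) left
block, the minimum at `i + 1`, and any position `j` of the right block. -/
lemma p31_2_glue_false :
    p31_2 (glue false A B hab) = p31_2 A + p31_2 B + if a = 0 ∨ b = 0 then 0 else b := by
  subst hab
  have hL k (hk : k ≤ a + 1) := sv_glue_left_cases false A B rfl hk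
  have hR k (hk : k ≤ b + 1) := sv_glue_right_cases false A B rfl hk
  simp only [leftShift, rightShift, Bool.false_eq_true, if_false] at hL hR
  set σ := glue false A B rfl
  have hmin : sv σ (a + 1) = 1 := sv_glue_min false A B rfl
  simp only [p31_2, card_filter, sum_product]
  rw [sum_Icc_one_add_one_add]
  have rowA : ∑ i ∈ Icc 1 a, ∑ j ∈ Icc 1 (a + 1 + b), (if i + 1 < j ∧
      sv σ (i + 1) < sv σ j ∧ sv σ j < sv σ i then 1 else 0) =
      ∑ i ∈ Icc 1 a, ((∑ j ∈ Icc 1 a,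
        if i + 1 < j ∧ sv A (i + 1) < sv A j ∧ sv A j < sv A i then 1 else 0) +
        if i = a then b else 0) := by
    refine sum_congr rfl fun i hi => ?_
    rw [mem_Icc] at hi
    have := hL i (by omega); have := hL (i + 1) (by omega)
    rw [sum_Icc_one_add_one_add, if_neg (by omega)]
    congr 1
    · rw [add_zero]
      refine sum_congr rfl fun j hj => if_congr ?_ rfl rfl
      rw [mem_Icc] at hj
      have := hL j (by omega)
      omega
    · split_ifs with hia
      · rw [sum_congr rfl fun l hl => if_pos ?_]
        · simp
        · rw [mem_Icc] at hl
          have := hR l (by omega)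
          omega
      · refine sum_eq_zero fun l hl => if_neg ?_
        rw [mem_Icc] at hl
        have := hR l (by omega)
        omega
  have rowMin : ∑ j ∈ Icc 1 (a + 1 + b), (if a + 1 + 1 < j ∧
      sv σ (a + 1 + 1) < sv σ j ∧ sv σ j < sv σ (a + 1) then 1 else 0) = 0 :=
    sum_eq_zero fun j _ => if_neg (by omega)
  have rowB : ∑ k ∈ Icc 1 b, ∑ j ∈ Icc 1 (a + 1 + b), (if a + 1 + k + 1 < j ∧
      sv σ (a + 1 + k + 1) < sv σ j ∧ sv σ j < sv σ (a + 1 + k) then 1 else 0) =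
      ∑ k ∈ Icc 1 b, ∑ l ∈ Icc 1 b,
        if k + 1 < l ∧ sv B (k + 1) < sv B l ∧ sv B l < sv B k then 1 else 0 := by
    refine sum_congr rfl fun k hk => ?_
    rw [mem_Icc] at hk
    have := hR k (by omega); have := hR (k + 1) (by omega); rw [← add_assoc] at this
    rw [sum_Icc_one_add_one_add_of_left_eq_zero b fun j hj => if_neg (by omega)]
    refine sum_congr rfl fun l hl => if_congr ?_ rfl rfl
    rw [mem_Icc] at hl
    have := hR l (by omega)
    omega
  rw [rowA, rowMin, rowB]
  simp only [sum_add_distrib, sum_ite_eq', mem_Icc]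
  split_ifs <;> omega

end Statistics

section Avoidance

variable {a b n : ℕ} (below : Bool) (A : Equiv.Perm (Fin a)) (B : Equiv.Perm (Fin b))
  (hab : a + 1 + b = n)

lemma glue_apply_of_lt {i : Fin n} (h : (i : ℕ) < a) :
    (glue below A B hab i : ℕ) = A ⟨i, h⟩ + leftShift below b :=
  glueVal_of_lt below A B h

lemma glue_apply_of_eq {i : Fin n} (h : (i : ℕ) = a) : (glue below A B hab i : ℕ) = 0 := by
  rw [glue_apply, h, glueVal_self]

lemma glue_apply_of_gt {i : Fin n} (h : a < (i : ℕ)) :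
    (glue below A B hab i : ℕ) = B ⟨i - (a + 1), by omega⟩ + rightShift below a :=
  glueVal_of_gt below A B h _

lemma glue_apply_castLE (i : Fin a) :
    (glue below A B hab (Fin.castLE (by omega) i) : ℕ) = A i + leftShift below b :=
  glue_apply_of_lt below A B hab (i := Fin.castLE _ i) i.isLt

lemma glue_apply_natAdd (i : Fin b) :
    (glue below A B hab ⟨a + 1 + i, by omega⟩ : ℕ) = B i + rightShift below a := by
  rw [glue_apply_of_gt below A B hab (by simp only; omega)]
  simp

lemma avoids312_glue_true :
    Avoids312 (glue true A B hab) ↔ Avoids312 A ∧ Avoids312 B := by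
  have hA := glue_apply_castLE true A B hab
  have hB := glue_apply_natAdd true A B hab
  simp only [leftShift, rightShift, if_true] at hA hB
  refine ⟨fun H => ⟨?_, ?_⟩, fun ⟨HA, HB⟩ => ?_⟩
  · rintro ⟨i, j, k, hij, hjk, h₁, h₂⟩
    refine H ⟨Fin.castLE (by omega) i, Fin.castLE (by omega) j, Fin.castLE (by omega) k,
      hij, hjk, ?_, ?_⟩ <;> simp only [Fin.lt_def, hA] at h₁ h₂ ⊢ <;> omega
  · rintro ⟨i, j, k, hij, hjk, h₁, h₂⟩
    refine H ⟨⟨a + 1 + i, by omega⟩, ⟨a + 1 + j, by omega⟩, ⟨a + 1 + k, by omega⟩,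
      ?_, ?_, ?_, ?_⟩ <;> simp only [Fin.lt_def, hB] at hij hjk h₁ h₂ ⊢ <;> omega
  · rintro ⟨i, j, k, hij, hjk, h₁, h₂⟩
    simp only [Fin.lt_def] at hij hjk h₁ h₂
    have vL (l : Fin n) (h : (l : ℕ) < a) := glue_apply_of_lt true A B hab h
    have vR (l : Fin n) (h : a < (l : ℕ)) := glue_apply_of_gt true A B hab h
    simp only [leftShift, rightShift, if_true] at vL vR
    rcases lt_trichotomy (i : ℕ) a with hi | hi | hi
    · have := vL i hi
      have := (A ⟨i, hi⟩).isLt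
      have hk : (k : ℕ) < a := by
        by_contra hk
        rcases (not_lt.1 hk).eq_or_lt with hk | hk
        · have := glue_apply_of_eq true A B hab hk.symm; omega
        · have := vR k hk; omega
      have := vL j (by omega)
      have := vL k hk
      exact HA ⟨⟨i, hi⟩, ⟨j, by omega⟩, ⟨k, hk⟩, hij, hjk, by simp only [Fin.lt_def]; omega,
        by simp only [Fin.lt_def]; omega⟩
    · have := glue_apply_of_eq true A B hab hi; omega
    · have := vR i hi; have := vR j (by omega); have := vR k (by omega)
      exact HB ⟨⟨i - (a + 1), by omega⟩, ⟨j - (a + 1), by omega⟩, ⟨k - (a + 1), by omega⟩,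
        by simp only [Fin.lt_def]; omega, by simp only [Fin.lt_def]; omega,
        by simp only [Fin.lt_def]; omega, by simp only [Fin.lt_def]; omega⟩

lemma avoids213_glue_false :
    Avoids213 (glue false A B hab) ↔ Avoids213 A ∧ Avoids213 B := by
  have hA := glue_apply_castLE false A B hab
  have hB := glue_apply_natAdd false A B hab
  simp only [leftShift, rightShift, Bool.false_eq_true, if_false] at hA hB
  refine ⟨fun H => ⟨?_, ?_⟩, fun ⟨HA, HB⟩ => ?_⟩
  · rintro ⟨i, j, k, hij, hjk, h₁, h₂⟩
    refine H ⟨Fin.castLE (by omega) i, Fin.castLE (by omega) j, Fin.castLE (by omega) k,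
      hij, hjk, ?_, ?_⟩ <;> simp only [Fin.lt_def, hA] at h₁ h₂ ⊢ <;> omega
  · rintro ⟨i, j, k, hij, hjk, h₁, h₂⟩
    refine H ⟨⟨a + 1 + i, by omega⟩, ⟨a + 1 + j, by omega⟩, ⟨a + 1 + k, by omega⟩,
      ?_, ?_, ?_, ?_⟩ <;> simp only [Fin.lt_def, hB] at hij hjk h₁ h₂ ⊢ <;> omega
  · rintro ⟨i, j, k, hij, hjk, h₁, h₂⟩
    simp only [Fin.lt_def] at hij hjk h₁ h₂
    have vL (l : Fin n) (h : (l : ℕ) < a) := glue_apply_of_lt false A B hab h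
    have vR (l : Fin n) (h : a < (l : ℕ)) := glue_apply_of_gt false A B hab h
    simp only [leftShift, rightShift, Bool.false_eq_true, if_false] at vL vR
    rcases lt_trichotomy (i : ℕ) a with hi | hi | hi
    · have := vL i hi
      have := (A ⟨i, hi⟩).isLt
      have hk : (k : ℕ) < a := by
        by_contra hk
        rcases (not_lt.1 hk).eq_or_lt with hk | hk
        · have := glue_apply_of_eq false A B hab hk.symm; omega
        · have := vR k hk; omega
      have := vL j (by omega)
      have := vL k hk
      exact HA ⟨⟨i, hi⟩, ⟨j, by omega⟩, ⟨k, hk⟩, hij, hjk, by simp only [Fin.lt_def]; omega,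
        by simp only [Fin.lt_def]; omega⟩
    · have := glue_apply_of_eq false A B hab hi; omega
    · have := vR i hi; have := vR j (by omega); have := vR k (by omega)
      exact HB ⟨⟨i - (a + 1), by omega⟩, ⟨j - (a + 1), by omega⟩, ⟨k - (a + 1), by omega⟩,
        by simp only [Fin.lt_def]; omega, by simp only [Fin.lt_def]; omega,
        by simp only [Fin.lt_def]; omega, by simp only [Fin.lt_def]; omega⟩

end Avoidance

section Decomposition

variable {n : ℕ}

lemma val_lt_card_of_forall_le (σ : Equiv.Perm (Fin n)) (v : Fin n) (S : Finset (Fin n))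
    (h : ∀ w ≤ v, σ⁻¹ w ∈ S) : (v : ℕ) < S.card := by
  have := card_le_card_of_injOn (fun w => σ⁻¹ w) (s := Iic v) (t := S)
    (fun w hw => h w (mem_Iic.1 hw)) σ⁻¹.injective.injOn
  rw [Fin.card_Iic] at this
  omega

lemma sub_le_card_of_forall_ge (σ : Equiv.Perm (Fin n)) (v : Fin n) (S : Finset (Fin n))
    (h : ∀ w ≥ v, σ⁻¹ w ∈ S) : n - v ≤ S.card := by
  have := card_le_card_of_injOn (fun w => σ⁻¹ w) (s := Ici v) (t := S)
    (fun w hw => h w (mem_Ici.1 hw)) σ⁻¹.injective.injOn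
  rwa [Fin.card_Ici] at this

def restrictBlock (σ : Equiv.Perm (Fin n)) (s c m : ℕ) (hs : s + m ≤ n)
    (hv : ∀ i : Fin n, s ≤ (i : ℕ) → (i : ℕ) < s + m → c ≤ (σ i : ℕ) ∧ (σ i : ℕ) < c + m) :
    Equiv.Perm (Fin m) :=
  Equiv.ofBijective
    (fun i => ⟨σ ⟨s + i, by omega⟩ - c, by have := hv ⟨s + i, by omega⟩ (by simp) (by simp); omega⟩)
    (Finite.injective_iff_bijective.1 fun i j hij => by
      have hi := hv ⟨s + i, by omega⟩ (by simp) (by simp)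
      have hj := hv ⟨s + j, by omega⟩ (by simp) (by simp)
      have h : σ ⟨s + i, by omega⟩ = σ ⟨s + j, by omega⟩ :=
        Fin.ext (by simp only [Fin.mk.inj_iff] at hij; omega)
      exact Fin.ext (by have := Fin.mk.inj_iff.1 (σ.injective h); omega))

lemma restrictBlock_apply (σ : Equiv.Perm (Fin n)) (s c m : ℕ) (hs : s + m ≤ n) (hv) (i : Fin m) :
    (restrictBlock σ s c m hs hv i : ℕ) = σ ⟨s + i, by omega⟩ - c := rfl

lemma exists_glue_eq (below : Bool) (σ : Equiv.Perm (Fin n)) (p : Fin n) (hp : (σ p : ℕ) = 0)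
    (hL : ∀ i, i < p → leftShift below (n - 1 - p) ≤ (σ i : ℕ) ∧
      (σ i : ℕ) < leftShift below (n - 1 - p) + p)
    (hR : ∀ i, p < i → rightShift below p ≤ (σ i : ℕ) ∧
      (σ i : ℕ) < rightShift below p + (n - 1 - p)) :
    ∃ (hab : (p : ℕ) + 1 + (n - 1 - p) = n) (A : Equiv.Perm (Fin p))
      (B : Equiv.Perm (Fin (n - 1 - p))), glue below A B hab = σ := by
  have hpn := p.isLt
  refine ⟨by omega,
    restrictBlock σ 0 _ p (by omega) fun i _ hi => hL i (by rw [Fin.lt_def]; omega),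
    restrictBlock σ (p + 1) _ (n - 1 - p) (by omega) fun i hi _ => hR i (by rw [Fin.lt_def]; omega),
    Equiv.ext fun i => Fin.ext ?_⟩
  rcases lt_trichotomy (i : ℕ) p with hi | hi | hi
  · have := hL i hi
    rw [glue_apply_of_lt _ _ _ _ hi, restrictBlock_apply]
    simp only [zero_add, Fin.eta]
    omega
  · rw [glue_apply_of_eq _ _ _ _ hi, ← hp, show i = p from Fin.ext hi]
  · have := hR i hi
    rw [glue_apply_of_gt _ _ _ _ hi, restrictBlock_apply]
    simp only [show (p : ℕ) + 1 + (i - (p + 1)) = i by omega, Fin.eta]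
    omega

lemma val_ne_zero_of_ne {σ : Equiv.Perm (Fin n)} {p : Fin n} (hp : (σ p : ℕ) = 0) {i : Fin n}
    (hi : i ≠ p) : (σ i : ℕ) ≠ 0 :=
  fun h => hi (σ.injective (Fin.ext (h.trans hp.symm)))

lemma exists_glue_true_of_avoids312 {σ : Equiv.Perm (Fin n)} (H : Avoids312 σ) {p : Fin n}
    (hp : (σ p : ℕ) = 0) :
    ∃ (hab : (p : ℕ) + 1 + (n - 1 - p) = n) (A : Equiv.Perm (Fin p))
      (B : Equiv.Perm (Fin (n - 1 - p))), glue true A B hab = σ := by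
  -- otherwise `i`, the minimum `p` and `k` form a `312`
  have cross (i k : Fin n) (hi : i < p) (hk : p < k) : (σ i : ℕ) < σ k := by
    by_contra h
    have := val_ne_zero_of_ne hp (ne_of_gt hk)
    have : σ k ≠ σ i := σ.injective.ne (ne_of_gt (hi.trans hk))
    exact H ⟨i, p, k, hi, hk, by rw [Fin.lt_def]; omega, by rw [Fin.lt_def]; omega⟩
  apply exists_glue_eq true σ p hp
  · intro i hi
    simp only [leftShift, if_true]
    have hcard := val_lt_card_of_forall_le σ (σ i) (Iic p) fun w hw =>
      mem_Iic.2 (not_lt.1 fun hw' => by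
        have := cross i _ hi hw'
        simp only [Equiv.Perm.coe_inv, Equiv.apply_symm_apply, ← Fin.lt_def] at this
        exact absurd hw (not_le.2 this))
    have := val_ne_zero_of_ne hp hi.ne
    rw [Fin.card_Iic] at hcard
    omega
  · intro k hk
    simp only [rightShift, if_true]
    have hcard := sub_le_card_of_forall_ge σ (σ k) (Ioi p) fun w hw => by
      rw [mem_Ioi]
      rcases lt_trichotomy (σ⁻¹ w) p with h | h | h
      · have := cross _ k h hk
        simp only [Equiv.Perm.coe_inv, Equiv.apply_symm_apply, ← Fin.lt_def] at this
        exact absurd hw (not_le.2 this)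
      · have := val_ne_zero_of_ne hp (ne_of_gt hk)
        rw [← h, Equiv.Perm.coe_inv, Equiv.apply_symm_apply] at hp
        rw [ge_iff_le, Fin.le_def] at hw
        omega
      · exact h
    have := (σ k).isLt
    rw [Fin.card_Ioi] at hcard
    omega

lemma exists_glue_false_of_avoids213 {σ : Equiv.Perm (Fin n)} (H : Avoids213 σ) {p : Fin n}
    (hp : (σ p : ℕ) = 0) :
    ∃ (hab : (p : ℕ) + 1 + (n - 1 - p) = n) (A : Equiv.Perm (Fin p))
      (B : Equiv.Perm (Fin (n - 1 - p))), glue false A B hab = σ := by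
  -- otherwise `i`, the minimum `p` and `k` form a `213`
  have cross (i k : Fin n) (hi : i < p) (hk : p < k) : (σ k : ℕ) < σ i := by
    by_contra h
    have := val_ne_zero_of_ne hp hi.ne
    have : σ k ≠ σ i := σ.injective.ne (ne_of_gt (hi.trans hk))
    exact H ⟨i, p, k, hi, hk, by rw [Fin.lt_def]; omega, by rw [Fin.lt_def]; omega⟩
  apply exists_glue_eq false σ p hp
  · intro i hi
    simp only [leftShift, Bool.false_eq_true, if_false]
    have hcard := sub_le_card_of_forall_ge σ (σ i) (Iio p) fun w hw => by
      rw [mem_Iio]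
      rcases lt_trichotomy (σ⁻¹ w) p with h | h | h
      · exact h
      · have := val_ne_zero_of_ne hp hi.ne
        rw [← h, Equiv.Perm.coe_inv, Equiv.apply_symm_apply] at hp
        rw [ge_iff_le, Fin.le_def] at hw
        omega
      · have := cross i _ hi h
        simp only [Equiv.Perm.coe_inv, Equiv.apply_symm_apply, ← Fin.lt_def] at this
        exact absurd hw (not_le.2 this)
    have := (σ i).isLt
    rw [Fin.card_Iio] at hcard
    omega
  · intro k hk
    simp only [rightShift, Bool.false_eq_true, if_false]
    have hcard := val_lt_card_of_forall_le σ (σ k) (Ici p) fun w hw =>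
      mem_Ici.2 (not_lt.1 fun hw' => by
        have := cross _ k hw' hk
        simp only [Equiv.Perm.coe_inv, Equiv.apply_symm_apply, ← Fin.lt_def] at this
        exact absurd hw (not_le.2 this))
    have := val_ne_zero_of_ne hp (ne_of_gt hk)
    rw [Fin.card_Ici] at hcard
    omega

variable {a b a' b' : ℕ} (below : Bool)

lemma eq_of_glue_eq_glue (hab : a + 1 + b = n) (hab' : a' + 1 + b' = n)
    {A : Equiv.Perm (Fin a)} {B : Equiv.Perm (Fin b)} {A' : Equiv.Perm (Fin a')}
    {B' : Equiv.Perm (Fin b')} (h : glue below A B hab = glue below A' B' hab') : a = a' := by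
  have h₀ : glue below A' B' hab' ⟨a, by omega⟩ = glue below A' B' hab' ⟨a', by omega⟩ :=
    Fin.ext (by rw [glue_apply_of_eq below A' B' hab' (i := ⟨a', by omega⟩) rfl, ← h,
      glue_apply_of_eq below A B hab rfl])
  exact Fin.mk.inj_iff.1 ((glue below A' B' hab').injective h₀)

lemma glue_injective (hab : a + 1 + b = n) {A A' : Equiv.Perm (Fin a)} {B B' : Equiv.Perm (Fin b)}
    (h : glue below A B hab = glue below A' B' hab) : A = A' ∧ B = B' := by
  refine ⟨Equiv.ext fun i => Fin.ext ?_, Equiv.ext fun i => Fin.ext ?_⟩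
  · have := glue_apply_castLE below A B hab i
    rw [h, glue_apply_castLE] at this
    omega
  · have := glue_apply_natAdd below A B hab i
    rw [h, glue_apply_natAdd] at this
    omega

end Decomposition

lemma monomial_glue {a b n : ℕ} (below : Bool) (hab : a + 1 + b = n) (A : Equiv.Perm (Fin a))
    (B : Equiv.Perm (Fin b)) {s sA sB e : ℕ} (hs : s = sA + sB + if a = 0 ∨ b = 0 then 0 else e)
    (q y t : ℝ) :
    q ^ s * y ^ vall (glue below A B hab) * t ^ des (glue below A B hab) =
      (if a = 0 then 1 else if b = 0 then t else q ^ e * y * t) *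
        (q ^ sA * y ^ vall A * t ^ des A) * (q ^ sB * y ^ vall B * t ^ des B) := by
  rw [hs, vall_glue, des_glue]
  rcases Nat.eq_zero_or_pos a with rfl | ha <;> rcases Nat.eq_zero_or_pos b with rfl | hb <;>
    simp only [*, Nat.pos_iff_ne_zero.1, or_self, or_false, or_true, ↓reduceIte, add_zero, pow_add,
      pow_one, one_mul] <;> ring

section GeneratingFunction

variable (P : (m : ℕ) → Equiv.Perm (Fin m) → Prop) (st : (m : ℕ) → Equiv.Perm (Fin m) → ℕ)

def statGF (m : ℕ) (q y t : ℝ) : ℝ :=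
  ∑ σ ∈ univ.filter (P m), q ^ st m σ * y ^ vall σ * t ^ des σ

lemma statGF_zero (hP : ∀ σ, P 0 σ) (hst : ∀ σ, st 0 σ = 0) (q y t : ℝ) :
    statGF P st 0 q y t = 1 := by
  rw [statGF, filter_true_of_mem fun σ _ => hP σ, Fintype.sum_unique]
  simp [hst, vall, des]

theorem statGF_succ (below : Bool) (e : ℕ → ℕ → ℕ)
    (hP : ∀ {a b n} (hab : a + 1 + b = n) (A : Equiv.Perm (Fin a)) (B : Equiv.Perm (Fin b)),
      P n (glue below A B hab) ↔ P a A ∧ P b B)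
    (hst : ∀ {a b n} (hab : a + 1 + b = n) (A : Equiv.Perm (Fin a)) (B : Equiv.Perm (Fin b)),
      st n (glue below A B hab) = st a A + st b B + if a = 0 ∨ b = 0 then 0 else e a b)
    (hdecomp : ∀ {n} (σ : Equiv.Perm (Fin (n + 1))), P (n + 1) σ →
      ∃ (a b : ℕ) (hab : a + 1 + b = n + 1) (A : Equiv.Perm (Fin a)) (B : Equiv.Perm (Fin b)),
        glue below A B hab = σ)
    (m : ℕ) (q y t : ℝ) :
    statGF P st (m + 1) q y t = ∑ ab ∈ antidiagonal m,
      (if ab.1 = 0 then 1 else if ab.2 = 0 then t else q ^ e ab.1 ab.2 * y * t) *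
        statGF P st ab.1 q y t * statGF P st ab.2 q y t := by
  have hsum {ab : ℕ × ℕ} (h : ab ∈ antidiagonal m) : ab.1 + 1 + ab.2 = m + 1 := by
    rw [HasAntidiagonal.mem_antidiagonal] at h; omega
  have hrhs : ∑ ab ∈ antidiagonal m,
      (if ab.1 = 0 then 1 else if ab.2 = 0 then t else q ^ e ab.1 ab.2 * y * t) *
        statGF P st ab.1 q y t * statGF P st ab.2 q y t =
      ∑ x ∈ (antidiagonal m).sigma fun ab => univ.filter (P ab.1) ×ˢ univ.filter (P ab.2),
        (if x.1.1 = 0 then 1 else if x.1.2 = 0 then t else q ^ e x.1.1 x.1.2 * y * t) *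
          (q ^ st _ x.2.1 * y ^ vall x.2.1 * t ^ des x.2.1) *
          (q ^ st _ x.2.2 * y ^ vall x.2.2 * t ^ des x.2.2) := by
    rw [sum_sigma]
    refine sum_congr rfl fun ab _ => ?_
    rw [statGF, statGF, sum_product, mul_assoc, sum_mul_sum, mul_sum]
    refine sum_congr rfl fun A _ => ?_
    rw [mul_sum]
    exact sum_congr rfl fun B _ => by ring
  rw [hrhs, statGF]
  symm
  refine sum_bij (fun x hx => glue below x.2.1 x.2.2 (hsum (mem_sigma.1 hx).1)) ?_ ?_ ?_ ?_
  · rintro ⟨ab, A, B⟩ hx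
    simp only [mem_sigma, mem_product, mem_filter, mem_univ, true_and] at hx ⊢
    exact (hP _ A B).2 hx.2
  · rintro ⟨⟨a, b⟩, A, B⟩ hx ⟨⟨a', b'⟩, A', B'⟩ hx' h
    have hsum₁ := hsum (mem_sigma.1 hx).1
    have hsum₂ := hsum (mem_sigma.1 hx').1
    dsimp only at h hsum₁ hsum₂
    obtain rfl := eq_of_glue_eq_glue below _ _ h
    obtain rfl : b = b' := by omega
    obtain ⟨rfl, rfl⟩ := glue_injective below _ h
    rfl
  · intro σ hσ
    rw [mem_filter] at hσ
    obtain ⟨a, b, hab, A, B, rfl⟩ := hdecomp σ hσ.2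
    have := (hP hab A B).1 hσ.2
    refine ⟨⟨(a, b), A, B⟩, ?_, rfl⟩
    simp only [mem_sigma, HasAntidiagonal.mem_antidiagonal, mem_product, mem_filter, mem_univ,
      true_and]
    exact ⟨by omega, this⟩
  · rintro ⟨⟨a, b⟩, A, B⟩ hx
    exact (monomial_glue below _ A B (hst _ A B) q y t).symm

end GeneratingFunction

lemma sum_antidiagonal_add_two {M : Type*} [AddCommMonoid M] (f : ℕ × ℕ → M) (m : ℕ) :
    ∑ ab ∈ antidiagonal (m + 2), f ab =
      f (0, m + 2) + f (m + 2, 0) + ∑ ab ∈ antidiagonal m, f (ab.1 + 1, ab.2 + 1) := by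
  rw [Finset.Nat.sum_antidiagonal_succ, Finset.Nat.sum_antidiagonal_succ', ← add_assoc]

theorem eq_pow_mul_of_recurrence (F : ℕ → ℝ → ℝ → ℝ) (g : ℕ → ℕ → ℝ)
    (h₀ : ∀ y t, F 0 y t = 1)
    (hrec : ∀ m y t, F (m + 1) y t = ∑ ab ∈ antidiagonal m,
      (if ab.1 = 0 then 1 else if ab.2 = 0 then t else g ab.1 ab.2 * y * t) *
        F ab.1 y t * F ab.2 y t)
    {t y u c : ℝ} (h₁ : t = c ^ 2 * y * u) (h₂ : 1 + t = c * (1 + u)) (m : ℕ) :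
    F (m + 1) 1 t = c ^ m * F (m + 1) y u := by
  have hF₁ y t : F 1 y t = 1 := by simp [hrec, h₀]
  have hF₂ y t : F 2 y t = 1 + t := by
    simp [hrec, Finset.Nat.antidiagonal_succ, h₀]
  have hF_add_three k y t : F (k + 3) y t = (1 + t) * F (k + 2) y t + ∑ ab ∈ antidiagonal k,
      g (ab.1 + 1) (ab.2 + 1) * y * t * F (ab.1 + 1) y t * F (ab.2 + 1) y t := by
    rw [hrec, sum_antidiagonal_add_two]
    simp only [↓reduceIte, h₀, mul_one, one_mul, Nat.add_eq_zero_iff, OfNat.ofNat_ne_zero,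
      and_false, one_ne_zero, add_left_inj]
    ring
  induction m using Nat.strong_induction_on with
  | _ m ih =>
    match m with
    | 0 => simp [hF₁]
    | 1 => rw [hF₂, hF₂, h₂, pow_one]
    | k + 2 =>
      rw [hF_add_three, hF_add_three, ih (k + 1) (by omega), mul_add, mul_sum]
      congr 1
      · rw [h₂]; ring
      · refine sum_congr rfl fun ab hab => ?_
        rw [HasAntidiagonal.mem_antidiagonal] at hab
        rw [ih ab.1 (by omega), ih ab.2 (by omega), h₁, ← hab]
        ring

lemma statGF_avoids312_succ (m : ℕ) (q y t : ℝ) :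
    statGF @Avoids312 @p2_13 (m + 1) q y t = ∑ ab ∈ antidiagonal m,
      (if ab.1 = 0 then 1 else if ab.2 = 0 then t else q ^ ab.1 * y * t) *
        statGF @Avoids312 @p2_13 ab.1 q y t * statGF @Avoids312 @p2_13 ab.2 q y t :=
  statGF_succ _ _ true (fun a _ => a) (fun hab A B => avoids312_glue_true A B hab)
    (fun hab A B => p2_13_glue_true A B hab)
    (fun σ hσ => ⟨_, _, exists_glue_true_of_avoids312 hσ (p := σ⁻¹ 0) (by simp)⟩) m q y t

lemma statGF_avoids213_succ (m : ℕ) (q y t : ℝ) :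
    statGF @Avoids213 @p31_2 (m + 1) q y t = ∑ ab ∈ antidiagonal m,
      (if ab.1 = 0 then 1 else if ab.2 = 0 then t else q ^ ab.2 * y * t) *
        statGF @Avoids213 @p31_2 ab.1 q y t * statGF @Avoids213 @p31_2 ab.2 q y t :=
  statGF_succ _ _ false (fun _ b => b) (fun hab A B => avoids213_glue_false A B hab)
    (fun hab A B => p31_2_glue_false A B hab)
    (fun σ hσ => ⟨_, _, exists_glue_false_of_avoids213 hσ (p := σ⁻¹ 0) (by simp)⟩) m q y t

theorem stmt2 (n : ℕ) (hn : 1 ≤ n) (q x t : ℝ) (h : (1 + x) * (x + t) * (1 + x * t) ≠ 0) :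
    (∑ σ ∈ Finset.univ.filter (fun σ : Equiv.Perm (Fin n) => Avoids213 σ),
        q ^ p31_2 σ * t ^ des σ =
      ((1 + x * t) / (1 + x)) ^ (n - 1) *
        ∑ σ ∈ Finset.univ.filter (fun σ : Equiv.Perm (Fin n) => Avoids213 σ),
          q ^ p31_2 σ * ((1 + x) ^ 2 * t / ((x + t) * (1 + x * t))) ^ vall σ * ((x + t) / (1 + x * t)) ^ des σ) ∧
    (∑ σ ∈ Finset.univ.filter (fun σ : Equiv.Perm (Fin n) => Avoids312 σ),
        q ^ p2_13 σ * t ^ des σ =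
      ((1 + x * t) / (1 + x)) ^ (n - 1) *
        ∑ σ ∈ Finset.univ.filter (fun σ : Equiv.Perm (Fin n) => Avoids312 σ),
          q ^ p2_13 σ * ((1 + x) ^ 2 * t / ((x + t) * (1 + x * t))) ^ vall σ * ((x + t) / (1 + x * t)) ^ des σ) := by
  obtain ⟨m, rfl⟩ : ∃ m, n = m + 1 := ⟨n - 1, by omega⟩
  have hx : 1 + x ≠ 0 := left_ne_zero_of_mul (left_ne_zero_of_mul h)
  have hxt : x + t ≠ 0 := right_ne_zero_of_mul (left_ne_zero_of_mul h)
  have hx' : 1 + x * t ≠ 0 := right_ne_zero_of_mul h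
  have h₁ : t = ((1 + x * t) / (1 + x)) ^ 2 * ((1 + x) ^ 2 * t / ((x + t) * (1 + x * t))) *
      ((x + t) / (1 + x * t)) := by
    rw [div_pow, div_mul_div_comm, div_mul_div_comm,
      eq_div_iff (mul_ne_zero (mul_ne_zero (pow_ne_zero 2 hx) (mul_ne_zero hxt hx')) hx')]
    ring
  have h₂ : 1 + t = (1 + x * t) / (1 + x) * (1 + (x + t) / (1 + x * t)) := by
    rw [one_add_div hx', div_mul_div_comm, eq_div_iff (mul_ne_zero hx hx')]
    ring
  constructor
  · have := eq_pow_mul_of_recurrence (fun m y t => statGF @Avoids213 @p31_2 m q y t)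
      (fun _ b => q ^ b) (statGF_zero _ _ (fun _ ⟨i, _⟩ => i.elim0) (fun _ => by simp [p31_2]) q)
      (statGF_avoids213_succ · q) h₁ h₂ m
    simpa [statGF] using this
  · have := eq_pow_mul_of_recurrence (fun m y t => statGF @Avoids312 @p2_13 m q y t)
      (fun a _ => q ^ a) (statGF_zero _ _ (fun _ ⟨i, _⟩ => i.elim0) (fun _ => by simp [p2_13]) q)
      (statGF_avoids312_succ · q) h₁ h₂ m
    simpa [statGF] using this

end EulerExc
end
end

section
/- For every integer n ≥ 1 and all real numbers q, x, t with (1+x)(x+t)(1+xt) ≠ 0, one has Σ_{σ∈D_n(321)} q^{inv σ} t^{exc σ} = ((1+xt)/(1+x))^{n} · Σ_{σ∈D_n(321)} q^{inv σ} · ((1+x)² t/((x+t)(1+xt)))^{cpk σ} · ((x+t)/(1+xt))^{exc σ}. -/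
open Finset

open scoped Classical

noncomputable section

namespace EulerExc

variable {n : ℕ}

/-! A 321-avoiding derangement is the union of two increasing matchings: its excedance positions
`E` onto its excedance values `V`, and `Eᶜ` onto `Vᶜ`. Hence it is determined by the pair `(E, V)`,
and the pairs that occur are cut out by arc-counting inequalities (`IsExcPair`). In these terms
`inv = Σ (V \ E) - Σ (E \ V)`, `cpk = #(V \ E)`, `cda = #(E ∩ V)` and `cdd = #(E ∪ V)ᶜ`.
Moving a point from `E ∩ V` to `(E ∪ V)ᶜ`, i.e. turning a double excedance into a double drop,
preserves the inequalities and the core `(E \ V, V \ E)`, so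
`Σ q ^ inv * u ^ cpk * v ^ cda * w ^ cdd` depends on `v, w` only through `v + w`. The theorem
compares `(v, w) = (t, 1)` with `((x + t) / (1 + x), (1 + x * t) / (1 + x))`, both of sum `1 + t`. -/

open Equiv

lemma card_filter_le_add_card_filter_compl_le (s : Finset (Fin n)) (x : Fin n) :
    #{y ∈ s | y ≤ x} + #{y ∈ sᶜ | y ≤ x} = x + 1 := by
  have hs : {y ∈ s | y ≤ x} = {y ∈ Iic x | y ∈ s} := by ext; simp [and_comm]
  have hsc : {y ∈ sᶜ | y ≤ x} = {y ∈ Iic x | y ∉ s} := by ext; simp [and_comm]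
  rw [hs, hsc, card_filter_add_card_filter_not, Fin.card_Iic]

lemma card_filter_image_le_of_strictMonoOn {α β : Type*} [LinearOrder α] [LinearOrder β]
    {s : Finset α} {f : α → β} (hf : StrictMonoOn f s) {x : α} (hx : x ∈ s) :
    #{y ∈ s.image f | y ≤ f x} = #{y ∈ s | y ≤ x} := by
  rw [filter_image, card_image_of_injOn (hf.injOn.mono (by simp +contextual [Set.subset_def]))]
  congr 1
  exact filter_congr fun y hy => hf.le_iff_le hy hx

lemma Perm.image_compl {α : Type*} [Fintype α] [DecidableEq α] (σ : Perm α) (s : Finset α) :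
    sᶜ.image σ = (s.image σ)ᶜ := by
  ext y
  simp only [mem_image, mem_compl]
  exact ⟨fun ⟨x, hx, hxy⟩ ⟨z, hz, hzy⟩ => hx (σ.injective (hzy.trans hxy.symm) ▸ hz),
    fun hy => ⟨σ⁻¹ y, fun h => hy ⟨_, h, by simp⟩, by simp⟩⟩

lemma exists_gt_apply_lt (σ : Perm (Fin n)) {y : Fin n} (hy : y < σ y) :
    ∃ k, y < k ∧ σ k < σ y := by
  by_contra! h
  have hmaps : Set.MapsTo ⇑σ⁻¹ (Iio (σ y) : Set (Fin n)) (Iio y) := by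
    intro v hv
    simp only [coe_Iio, Set.mem_Iio] at hv ⊢
    by_contra! hle
    rcases hle.eq_or_lt with heq | hlt
    · exact hv.ne (by rw [heq]; simp)
    · exact (h _ hlt).not_gt (by simpa using hv)
  have := card_le_card_of_injOn _ hmaps (σ⁻¹).injective.injOn
  simp only [Fin.card_Iio] at this
  exact this.not_gt hy

lemma exists_lt_apply_gt (σ : Perm (Fin n)) {y : Fin n} (hy : σ y < y) :
    ∃ k, k < y ∧ σ y < σ k := by
  obtain ⟨k, hk, hσk⟩ := exists_gt_apply_lt σ⁻¹ (y := σ y) (by simpa using hy)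
  exact ⟨σ⁻¹ k, by simpa using hσk, by simpa using hk⟩

def excSet (σ : Perm (Fin n)) : Finset (Fin n) := {i | i < σ i}

def excValSet (σ : Perm (Fin n)) : Finset (Fin n) := {i | σ⁻¹ i < i}

@[simp] lemma mem_excSet {σ : Perm (Fin n)} {i : Fin n} : i ∈ excSet σ ↔ i < σ i := by
  simp [excSet]

@[simp] lemma mem_excValSet {σ : Perm (Fin n)} {i : Fin n} : i ∈ excValSet σ ↔ σ⁻¹ i < i := by
  simp [excValSet]

lemma apply_mem_excValSet {σ : Perm (Fin n)} {i : Fin n} : σ i ∈ excValSet σ ↔ i ∈ excSet σ := by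
  simp

lemma excValSet_eq_image (σ : Perm (Fin n)) : excValSet σ = (excSet σ).image σ := by
  ext i
  simp only [mem_excValSet, mem_image, mem_excSet]
  exact ⟨fun h => ⟨σ⁻¹ i, by simpa using h, by simp⟩, by rintro ⟨j, hj, rfl⟩; simpa using hj⟩

lemma card_excValSet (σ : Perm (Fin n)) : #(excValSet σ) = #(excSet σ) := by
  rw [excValSet_eq_image, card_image_of_injective _ σ.injective]

lemma IsDerangement.apply_lt_of_not_mem_excSet {σ : Perm (Fin n)} (hσ : IsDerangement σ)
    {i : Fin n} (hi : i ∉ excSet σ) : σ i < i :=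
  (not_lt.mp (mem_excSet.not.mp hi)).lt_of_ne (hσ i)

lemma Avoids321.apply_lt_apply_of_lt_apply {σ : Perm (Fin n)} (hσ : Avoids321 σ) {i j : Fin n}
    (hij : i < j) (hj : j < σ j) : σ i < σ j := by
  by_contra! hle
  obtain ⟨k, hjk, hk⟩ := exists_gt_apply_lt σ hj
  exact hσ ⟨i, j, k, hij, hjk, hk, hle.lt_of_ne (σ.injective.ne hij.ne')⟩

lemma Avoids321.apply_lt_apply_of_apply_lt {σ : Perm (Fin n)} (hσ : Avoids321 σ) {i j : Fin n}
    (hij : i < j) (hi : σ i < i) : σ i < σ j := by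
  by_contra! hle
  obtain ⟨k, hki, hk⟩ := exists_lt_apply_gt σ hi
  exact hσ ⟨k, i, j, hki, hij, hle.lt_of_ne (σ.injective.ne hij.ne'), hk⟩

lemma Avoids321.strictMonoOn_excSet {σ : Perm (Fin n)} (hσ : Avoids321 σ) :
    StrictMonoOn σ (excSet σ) :=
  fun _ _ _ hj hij => hσ.apply_lt_apply_of_lt_apply hij (mem_excSet.mp hj)

lemma Avoids321.strictMonoOn_compl_excSet {σ : Perm (Fin n)} (hσ : Avoids321 σ)
    (hd : IsDerangement σ) : StrictMonoOn σ ↑(excSet σ)ᶜ :=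
  fun _ hi _ _ hij =>
    hσ.apply_lt_apply_of_apply_lt hij (hd.apply_lt_of_not_mem_excSet (mem_compl.mp hi))

/-- Of any three positions two lie on the same side of `s`, where `σ` increases. -/
lemma avoids321_of_strictMonoOn {σ : Perm (Fin n)} {s : Finset (Fin n)}
    (hs : StrictMonoOn σ s) (hsc : StrictMonoOn σ ↑sᶜ) : Avoids321 σ := by
  rintro ⟨i, j, k, hij, hjk, hkj, hji⟩
  have mono {a b : Fin n} (hab : a < b) (h : a ∈ s ↔ b ∈ s) : σ a < σ b := by
    by_cases ha : a ∈ s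
    · exact hs ha (h.mp ha) hab
    · exact hsc (mem_compl.mpr ha) (mem_compl.mpr (h.not.mp ha)) hab
  by_cases hi : i ∈ s <;> by_cases hj : j ∈ s <;> by_cases hk : k ∈ s
  all_goals first
    | exact (mono hij (by tauto)).not_gt hji
    | exact (mono hjk (by tauto)).not_gt hkj
    | exact (mono (hij.trans hjk) (by tauto)).not_gt (hkj.trans hji)

/-- `#{e ∈ E | e ≤ x} - #{v ∈ V | v ≤ x}` counts the excedance arcs `i ↦ σ i` with
`i ≤ x < σ i`; it must be positive except at cyclic peaks. -/
def IsExcPair (E V : Finset (Fin n)) : Prop :=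
  #E = #V ∧ ∀ x, #{v ∈ V | v ≤ x} ≤ #{e ∈ E | e ≤ x} ∧
    (x ∉ V \ E → #{v ∈ V | v ≤ x} < #{e ∈ E | e ≤ x})

lemma isExcPair_excSet {σ : Perm (Fin n)} (hσ : IsDerangement σ) :
    IsExcPair (excSet σ) (excValSet σ) := by
  refine ⟨(card_excValSet σ).symm, fun x => ⟨?_, fun hx => ?_⟩⟩
  · refine card_le_card_of_injOn _ (fun v hv => ?_) (σ⁻¹).injective.injOn
    simp only [coe_filter, Set.mem_ofPred_eq, mem_excValSet, mem_excSet] at hv ⊢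
    exact ⟨by simpa using hv.1, hv.1.le.trans hv.2⟩
  by_cases hxE : x ∈ excSet σ
  · calc #{v ∈ excValSet σ | v ≤ x} ≤ #({e ∈ excSet σ | e ≤ x}.erase x) := by
          refine card_le_card_of_injOn _ (fun v hv => ?_) (σ⁻¹).injective.injOn
          simp only [coe_filter, Set.mem_ofPred_eq, mem_excValSet, coe_erase, Set.mem_sdiff,
            mem_excSet, Set.mem_singleton_iff] at hv ⊢
          exact ⟨⟨by simpa using hv.1, hv.1.le.trans hv.2⟩, (hv.1.trans_le hv.2).ne⟩
      _ < #{e ∈ excSet σ | e ≤ x} := card_erase_lt_of_mem (by simpa using hxE)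
  · have hxV : x ∉ excValSet σ := fun h => hx (mem_sdiff.mpr ⟨h, hxE⟩)
    have hcompl : #{e ∈ (excSet σ)ᶜ | e ≤ x} < #{v ∈ (excValSet σ)ᶜ | v ≤ x} :=
      calc #{e ∈ (excSet σ)ᶜ | e ≤ x} ≤ #({v ∈ (excValSet σ)ᶜ | v ≤ x}.erase x) := by
            refine card_le_card_of_injOn _ (fun d hd => ?_) σ.injective.injOn
            simp only [coe_filter, mem_compl, Set.mem_ofPred_eq, coe_erase, Set.mem_sdiff,
              Set.mem_singleton_iff, apply_mem_excValSet] at hd ⊢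
            have hdrop := hσ.apply_lt_of_not_mem_excSet hd.1
            exact ⟨⟨hd.1, hdrop.le.trans hd.2⟩, (hdrop.trans_le hd.2).ne⟩
        _ < #{v ∈ (excValSet σ)ᶜ | v ≤ x} := card_erase_lt_of_mem (by simpa using hxV)
    have := card_filter_le_add_card_filter_compl_le (excSet σ) x
    have := card_filter_le_add_card_filter_compl_le (excValSet σ) x
    omega

lemma exists_perm_image_eq_strictMonoOn (E V : Finset (Fin n)) (h : #E = #V) :
    ∃ π : Perm (Fin n), E.image π = V ∧ StrictMonoOn π E ∧ StrictMonoOn π ↑Eᶜ := by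
  let e : {x // x ∈ E} ≃o {x // x ∈ V} :=
    (Fintype.orderIsoFinOfCardEq _ (Fintype.card_coe E)).symm.trans
      (Fintype.orderIsoFinOfCardEq _ ((Fintype.card_coe V).trans h.symm))
  let f : {x // x ∉ E} ≃o {x // x ∉ V} :=
    (Fintype.orderIsoFinOfCardEq _ rfl).symm.trans (Fintype.orderIsoFinOfCardEq _
      (by simp only [Fintype.card_subtype_compl, Fintype.card_coe, h]))
  let π := Equiv.subtypeCongr e.toEquiv f.toEquiv
  have hπE (x : Fin n) (hx : x ∈ E) : π x = e ⟨x, hx⟩ := by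
    simp [π, Equiv.subtypeCongr, Equiv.sumCompl, hx]
  have hπEc (x : Fin n) (hx : x ∉ E) : π x = f ⟨x, hx⟩ := by
    simp [π, Equiv.subtypeCongr, Equiv.sumCompl, hx]
  refine ⟨π, ?_, fun x hx y hy hxy => ?_, fun x hx y hy hxy => ?_⟩
  · ext v
    simp only [mem_image]
    refine ⟨?_, fun hv => ?_⟩
    · rintro ⟨x, hx, rfl⟩
      exact hπE x hx ▸ (e ⟨x, hx⟩).2
    · refine ⟨e.symm ⟨v, hv⟩, (e.symm ⟨v, hv⟩).2, ?_⟩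
      rw [hπE _ (e.symm ⟨v, hv⟩).2]
      simp
  · rw [hπE x hx, hπE y hy]
    exact e.strictMono (show (⟨x, hx⟩ : {x // x ∈ E}) < ⟨y, hy⟩ from hxy)
  · have hx' : x ∉ E := mem_compl.mp hx
    have hy' : y ∉ E := mem_compl.mp hy
    rw [hπEc x hx', hπEc y hy']
    exact f.strictMono (show (⟨x, hx'⟩ : {x // x ∉ E}) < ⟨y, hy'⟩ from hxy)

section Reconstruction

variable {E V : Finset (Fin n)} {π : Perm (Fin n)}

lemma lt_apply_of_isExcPair (hEV : IsExcPair E V) (himage : E.image π = V)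
    (hE : StrictMonoOn π E) {x : Fin n} (hx : x ∈ E) : x < π x := by
  by_contra! hle
  have : #{e ∈ E | e ≤ x} ≤ #{v ∈ V | v ≤ x} := by
    rw [← card_filter_image_le_of_strictMonoOn hE hx, himage]
    exact card_le_card (monotone_filter_right _ fun _ _ hv => hv.trans hle)
  exact ((hEV.2 x).2 fun h => (mem_sdiff.mp h).2 hx).not_ge this

lemma apply_lt_of_isExcPair (hEV : IsExcPair E V) (himage : E.image π = V)
    (hEc : StrictMonoOn π ↑Eᶜ) {x : Fin n} (hx : x ∉ E) : π x < x := by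
  by_contra! hle
  have hcount : #{d ∈ Vᶜ | d ≤ π x} = #{d ∈ Eᶜ | d ≤ x} := by
    rw [← himage, ← Perm.image_compl]
    exact card_filter_image_le_of_strictMonoOn hEc (mem_compl.mpr hx)
  have hπx : π x ∉ V := by
    rw [← himage, mem_image]
    rintro ⟨y, hy, hyx⟩
    exact hx (π.injective hyx ▸ hy)
  have := card_filter_le_add_card_filter_compl_le E x
  have := card_filter_le_add_card_filter_compl_le V x
  by_cases hxV : x ∈ V
  · have : #{d ∈ Vᶜ | d ≤ x} < #{d ∈ Vᶜ | d ≤ π x} := by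
      refine card_lt_card ((ssubset_iff_of_subset ?_).mpr ⟨π x, ?_, ?_⟩)
      · exact monotone_filter_right _ fun _ _ hd => hd.trans hle
      · simpa using hπx
      · simpa [hπx] using hle.lt_of_ne fun h => hπx (h ▸ hxV)
    have := (hEV.2 x).1
    omega
  · have : #{d ∈ Vᶜ | d ≤ x} ≤ #{d ∈ Vᶜ | d ≤ π x} :=
      card_le_card (monotone_filter_right _ fun _ _ hd => hd.trans hle)
    have := (hEV.2 x).2 fun h => hxV (mem_sdiff.mp h).1
    omega

lemma excSet_eq_of_isExcPair (hEV : IsExcPair E V) (himage : E.image π = V)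
    (hE : StrictMonoOn π E) (hEc : StrictMonoOn π ↑Eᶜ) : excSet π = E := by
  ext x
  rw [mem_excSet]
  by_cases hx : x ∈ E
  · exact iff_of_true (lt_apply_of_isExcPair hEV himage hE hx) hx
  · exact iff_of_false (apply_lt_of_isExcPair hEV himage hEc hx).not_gt hx

end Reconstruction

lemma eqOn_of_strictMonoOn_of_image_eq {α β : Type*} [LinearOrder α] [Preorder β]
    [DecidableEq β] {f g : α → β} {s : Finset α} (hf : StrictMonoOn f s)
    (hg : StrictMonoOn g s) (h : s.image f = s.image g) : Set.EqOn f g s := by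
  have hfg : (fun a : s => f a) = fun a : s => g a := by
    refine (StrictMono.range_inj (f := fun a : s => f a) (g := fun a : s => g a)
      (fun a b hab => hf a.2 b.2 hab) (fun a b hab => hg a.2 b.2 hab)).mp ?_
    have himg := congrArg ((↑) : Finset β → Set β) h
    rwa [coe_image, coe_image, Set.image_eq_range, Set.image_eq_range] at himg
  exact fun x hx => congrFun hfg ⟨x, hx⟩

lemma Perm.eq_of_strictMonoOn {σ τ : Perm (Fin n)} {s : Finset (Fin n)}
    (hσ : StrictMonoOn σ s) (hσc : StrictMonoOn σ ↑sᶜ) (hτ : StrictMonoOn τ s)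
    (hτc : StrictMonoOn τ ↑sᶜ) (h : s.image σ = s.image τ) : σ = τ := by
  have hc : sᶜ.image σ = sᶜ.image τ := by rw [Perm.image_compl, Perm.image_compl, h]
  ext x
  by_cases hx : x ∈ s
  · rw [eqOn_of_strictMonoOn_of_image_eq hσ hτ h hx]
  · rw [eqOn_of_strictMonoOn_of_image_eq hσc hτc hc (mem_compl.mpr hx)]

def derangements321 (n : ℕ) : Finset (Perm (Fin n)) := {σ | IsDerangement σ ∧ Avoids321 σ}

lemma mem_derangements321 {σ : Perm (Fin n)} :
    σ ∈ derangements321 n ↔ IsDerangement σ ∧ Avoids321 σ := by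
  simp [derangements321]

def excPairs (n : ℕ) : Finset (Finset (Fin n) × Finset (Fin n)) := {p | IsExcPair p.1 p.2}

lemma sum_derangements321_eq_sum_excPairs {M : Type*} [AddCommMonoid M]
    (F : Finset (Fin n) × Finset (Fin n) → M) :
    ∑ σ ∈ derangements321 n, F (excSet σ, excValSet σ) = ∑ p ∈ excPairs n, F p := by
  refine sum_nbij (fun σ => (excSet σ, excValSet σ)) (fun σ hσ => ?_) (fun σ hσ τ hτ h => ?_)
    (fun p hp => ?_) fun _ _ => rfl
  · simp only [excPairs, mem_filter, mem_univ, true_and]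
    exact isExcPair_excSet (mem_derangements321.mp hσ).1
  · rw [mem_coe, mem_derangements321] at hσ hτ
    simp only [Prod.mk.injEq] at h
    refine Perm.eq_of_strictMonoOn hσ.2.strictMonoOn_excSet (hσ.2.strictMonoOn_compl_excSet hσ.1)
      (h.1 ▸ hτ.2.strictMonoOn_excSet) (h.1 ▸ hτ.2.strictMonoOn_compl_excSet hτ.1) ?_
    rw [← excValSet_eq_image, h.2, h.1, excValSet_eq_image]
  · simp only [excPairs, coe_filter, mem_univ, true_and, Set.mem_ofPred_eq] at hp
    obtain ⟨π, himage, hE, hEc⟩ := exists_perm_image_eq_strictMonoOn p.1 p.2 hp.1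
    have hexc := excSet_eq_of_isExcPair hp himage hE hEc
    refine ⟨π, ?_, ?_⟩
    · rw [mem_coe, mem_derangements321]
      refine ⟨fun x => ?_, avoids321_of_strictMonoOn hE hEc⟩
      by_cases hx : x ∈ p.1
      · exact (lt_apply_of_isExcPair hp himage hE hx).ne'
      · exact (apply_lt_of_isExcPair hp himage hEc hx).ne
    · show (excSet π, excValSet π) = p
      rw [excValSet_eq_image, hexc, himage]

lemma inv_eq_sum_card (σ : Perm (Fin n)) : inv σ = ∑ i, #{j | i < j ∧ σ j < σ i} := by
  simp only [inv, card_filter, ← univ_product_univ, sum_product]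

lemma card_inversions_of_lt_apply {σ : Perm (Fin n)} (hσ : Avoids321 σ) {i : Fin n}
    (hi : i < σ i) : #{j | i < j ∧ σ j < σ i} = σ i - i := by
  have hbelow : #{j | σ j < σ i} = σ i := by
    rw [← Fin.card_Iio (σ i)]
    exact card_equiv σ fun j => by simp
  have hsplit : ({j | σ j < σ i} : Finset (Fin n)) =
      ({j | j < i} : Finset (Fin n)) ∪ ({j | i < j ∧ σ j < σ i} : Finset (Fin n)) := by
    ext j
    simp only [mem_filter, mem_univ, true_and, mem_union]
    refine ⟨fun h => ?_, ?_⟩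
    · rcases lt_trichotomy j i with hji | rfl | hij
      exacts [Or.inl hji, absurd h (lt_irrefl _), Or.inr ⟨hij, h⟩]
    · rintro (hji | h)
      exacts [hσ.apply_lt_apply_of_lt_apply hji hi, h.2]
  have hdisj : Disjoint ({j | j < i} : Finset (Fin n)) ({j | i < j ∧ σ j < σ i} : Finset (Fin n)) :=
    disjoint_filter.mpr fun j _ hji hij => hji.not_gt hij.1
  rw [hsplit, card_union_of_disjoint hdisj] at hbelow
  have : #({j | j < i} : Finset (Fin n)) = i := by
    rw [← Fin.card_Iio i]
    exact card_equiv (Equiv.refl _) fun j => by simp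
  omega

lemma inv_eq_sum_excSet {σ : Perm (Fin n)} (hd : IsDerangement σ) (hσ : Avoids321 σ) :
    inv σ = ∑ i ∈ excSet σ, ((σ i : ℕ) - i) := by
  rw [inv_eq_sum_card, ← sum_subset (subset_univ (excSet σ)) fun i _ hi => ?_]
  · exact sum_congr rfl fun i hi => card_inversions_of_lt_apply hσ (mem_excSet.mp hi)
  · refine card_eq_zero.mpr (filter_eq_empty_iff.mpr fun j _ h => ?_)
    exact (hσ.apply_lt_apply_of_apply_lt h.1 (hd.apply_lt_of_not_mem_excSet hi)).not_gt h.2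

lemma sum_eq_sum_sdiff_add_sum_inter {ι M : Type*} [DecidableEq ι] [AddCommMonoid M]
    (s t : Finset ι) (f : ι → M) : ∑ i ∈ s, f i = ∑ i ∈ s \ t, f i + ∑ i ∈ s ∩ t, f i := by
  rw [← sum_union (disjoint_sdiff_inter s t), sdiff_union_inter]

lemma inv_eq_sum_sdiff_sub_sum_sdiff {σ : Perm (Fin n)} (hd : IsDerangement σ)
    (hσ : Avoids321 σ) : inv σ = ∑ i ∈ excValSet σ \ excSet σ, (i : ℕ) -
      ∑ i ∈ excSet σ \ excValSet σ, (i : ℕ) := by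
  have htotal : inv σ + ∑ i ∈ excSet σ, (i : ℕ) = ∑ i ∈ excValSet σ, (i : ℕ) := by
    rw [inv_eq_sum_excSet hd hσ, ← sum_add_distrib, excValSet_eq_image,
      sum_image fun _ _ _ _ h => σ.injective h]
    exact sum_congr rfl fun i hi => Nat.sub_add_cancel (mem_excSet.mp hi).le
  rw [sum_eq_sum_sdiff_add_sum_inter _ (excValSet σ),
    sum_eq_sum_sdiff_add_sum_inter (excValSet σ) (excSet σ), inter_comm] at htotal
  omega

lemma cpk_eq_card_sdiff {σ : Perm (Fin n)} (hd : IsDerangement σ) :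
    cpk σ = #(excValSet σ \ excSet σ) := by
  rw [cpk]
  congr 1
  ext x
  simp only [mem_filter, mem_univ, true_and, mem_sdiff, mem_excSet, mem_excValSet, not_lt]
  exact and_congr_right fun _ => ⟨le_of_lt, fun h => h.lt_of_ne (hd x)⟩

lemma cda_eq_card_inter (σ : Perm (Fin n)) : cda σ = #(excSet σ ∩ excValSet σ) := by
  rw [cda, filter_and, inter_comm]
  rfl

lemma cdd_eq_card_compl_union {σ : Perm (Fin n)} (hd : IsDerangement σ) :
    cdd σ = #(excSet σ ∪ excValSet σ)ᶜ := by
  rw [cdd]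
  congr 1
  ext x
  have hinv : σ⁻¹ x ≠ x := fun h => hd x (by simpa using congrArg σ h.symm)
  simp only [mem_filter, mem_univ, true_and, mem_compl, mem_union, mem_excSet, mem_excValSet,
    not_or, not_lt]
  exact ⟨fun h => ⟨h.2.le, h.1.le⟩,
    fun h => ⟨h.2.lt_of_ne hinv.symm, h.1.lt_of_ne (hd x)⟩⟩

lemma exc_eq_cpk_add_cda {σ : Perm (Fin n)} (hd : IsDerangement σ) :
    exc σ = cpk σ + cda σ := by
  rw [cpk_eq_card_sdiff hd, cda_eq_card_inter, inter_comm, card_sdiff_add_card_inter,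
    card_excValSet]
  rfl

lemma exc_add_cpk_add_cdd {σ : Perm (Fin n)} (hd : IsDerangement σ) :
    exc σ + cpk σ + cdd σ = n := by
  rw [cpk_eq_card_sdiff hd, cdd_eq_card_compl_union hd, add_comm (exc σ),
    show exc σ = #(excSet σ) from rfl, card_sdiff_add_card, union_comm, card_add_card_compl,
    Fintype.card_fin]

lemma union_sdiff_union_of_disjoint {α : Type*} [DecidableEq α] {A B S : Finset α}
    (hA : Disjoint A S) : (A ∪ S) \ (B ∪ S) = A \ B := by
  ext x
  have : x ∈ A → x ∉ S := fun h => disjoint_left.mp hA h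
  simp only [mem_sdiff, mem_union]
  tauto

/-- Adding the same set `S` of double excedances to both sides changes no arc count. -/
lemma isExcPair_union_iff {A B S : Finset (Fin n)} (hA : Disjoint A S) (hB : Disjoint B S) :
    IsExcPair (A ∪ S) (B ∪ S) ↔ IsExcPair A B := by
  have hcount {T : Finset (Fin n)} (hT : Disjoint T S) (x : Fin n) :
      #{y ∈ T ∪ S | y ≤ x} = #{y ∈ T | y ≤ x} + #{y ∈ S | y ≤ x} := by
    rw [filter_union, card_union_of_disjoint (disjoint_filter_filter hT)]
  simp only [IsExcPair, card_union_of_disjoint hA, card_union_of_disjoint hB, hcount hA,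
    hcount hB, union_sdiff_union_of_disjoint hB, add_left_inj, add_le_add_iff_right, add_lt_add_iff_right]

lemma sum_excPairs_eq_sum_disjoint {R : Type*} [CommSemiring R]
    (f : Finset (Fin n) × Finset (Fin n) → R) (v w : R) :
    ∑ p ∈ excPairs n, f (p.1 \ p.2, p.2 \ p.1) * v ^ #(p.1 ∩ p.2) * w ^ #(p.1 ∪ p.2)ᶜ =
      ∑ c ∈ excPairs n with Disjoint c.1 c.2, f c * (v + w) ^ #(c.1 ∪ c.2)ᶜ := by
  have hbinom (T : Finset (Fin n)) :
      (v + w) ^ #T = ∑ S ∈ T.powerset, v ^ #S * w ^ #(T \ S) := by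
    rw [← prod_const, prod_add]
    simp only [prod_const]
  simp only [hbinom, mul_sum]
  rw [sum_sigma']
  refine sum_nbij' (fun p => ⟨(p.1 \ p.2, p.2 \ p.1), p.1 ∩ p.2⟩)
    (fun x => (x.1.1 ∪ x.2, x.1.2 ∪ x.2)) ?_ ?_ ?_ ?_ ?_
  · intro p hp
    simp only [excPairs, mem_filter, mem_univ, true_and] at hp
    simp only [mem_sigma, excPairs, mem_filter, mem_univ, true_and, mem_powerset]
    refine ⟨⟨?_, disjoint_sdiff_sdiff⟩, ?_⟩
    · rw [← isExcPair_union_iff (S := p.1 ∩ p.2) (disjoint_sdiff_inter _ _)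
        (inter_comm p.1 p.2 ▸ disjoint_sdiff_inter _ _), sdiff_union_inter,
        inter_comm, sdiff_union_inter]
      exact hp
    · intro x
      simp only [mem_inter, mem_compl, mem_union, mem_sdiff]
      tauto
  · rintro ⟨⟨A, B⟩, S⟩ hx
    simp only [mem_sigma, excPairs, mem_filter, mem_univ, true_and, mem_powerset,
      subset_compl_iff_disjoint_left, disjoint_union_left] at hx ⊢
    exact (isExcPair_union_iff hx.2.1 hx.2.2).mpr hx.1.1
  · intro p _
    simp only [sdiff_union_inter, inter_comm p.1 p.2 ▸ sdiff_union_inter p.2 p.1]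
  · rintro ⟨⟨A, B⟩, S⟩ hx
    simp only [mem_sigma, mem_filter, mem_powerset, subset_compl_iff_disjoint_left,
      disjoint_union_left] at hx
    obtain ⟨⟨-, hAB⟩, hAS, hBS⟩ := hx
    dsimp only
    rw [union_sdiff_union_of_disjoint hAS, union_sdiff_union_of_disjoint hBS,
      sdiff_eq_self_of_disjoint hAB, sdiff_eq_self_of_disjoint hAB.symm,
      ← inter_union_distrib_right, disjoint_iff_inter_eq_empty.mp hAB, empty_union]
  · intro p _
    have hset : (p.1 ∪ p.2)ᶜ = (p.1 \ p.2 ∪ p.2 \ p.1)ᶜ \ (p.1 ∩ p.2) := by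
      ext x
      simp only [mem_compl, mem_union, mem_sdiff, mem_inter]
      tauto
    rw [hset, mul_assoc]

theorem sum_derangements321_eq_sum_disjoint_excPairs {R : Type*} [CommSemiring R]
    (q u v w : R) :
    ∑ σ ∈ derangements321 n, q ^ inv σ * u ^ cpk σ * v ^ cda σ * w ^ cdd σ =
      ∑ c ∈ excPairs n with Disjoint c.1 c.2,
        q ^ (∑ i ∈ c.2, (i : ℕ) - ∑ i ∈ c.1, (i : ℕ)) * u ^ #c.2 * (v + w) ^ #(c.1 ∪ c.2)ᶜ := by
  let f (c : Finset (Fin n) × Finset (Fin n)) : R :=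
    q ^ (∑ i ∈ c.2, (i : ℕ) - ∑ i ∈ c.1, (i : ℕ)) * u ^ #c.2
  calc ∑ σ ∈ derangements321 n, q ^ inv σ * u ^ cpk σ * v ^ cda σ * w ^ cdd σ
      = ∑ σ ∈ derangements321 n, f (excSet σ \ excValSet σ, excValSet σ \ excSet σ) *
          v ^ #(excSet σ ∩ excValSet σ) * w ^ #(excSet σ ∪ excValSet σ)ᶜ := by
        refine sum_congr rfl fun σ hσ => ?_
        obtain ⟨hd, hσ⟩ := mem_derangements321.mp hσ
        rw [inv_eq_sum_sdiff_sub_sum_sdiff hd hσ, cpk_eq_card_sdiff hd, cda_eq_card_inter,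
          cdd_eq_card_compl_union hd]
    _ = ∑ p ∈ excPairs n, f (p.1 \ p.2, p.2 \ p.1) * v ^ #(p.1 ∩ p.2) * w ^ #(p.1 ∪ p.2)ᶜ :=
        sum_derangements321_eq_sum_excPairs
          fun p => f (p.1 \ p.2, p.2 \ p.1) * v ^ #(p.1 ∩ p.2) * w ^ #(p.1 ∪ p.2)ᶜ
    _ = _ := sum_excPairs_eq_sum_disjoint f v w

theorem sum_derangements321_eq_of_add_eq {R : Type*} [CommSemiring R] (q u : R)
    {v w v' w' : R} (h : v + w = v' + w') :
    ∑ σ ∈ derangements321 n, q ^ inv σ * u ^ cpk σ * v ^ cda σ * w ^ cdd σ =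
      ∑ σ ∈ derangements321 n, q ^ inv σ * u ^ cpk σ * v' ^ cda σ * w' ^ cdd σ := by
  rw [sum_derangements321_eq_sum_disjoint_excPairs, sum_derangements321_eq_sum_disjoint_excPairs,
    h]

theorem sum_derangements321_inv_exc_eq {R : Type*} [CommSemiring R] (q t a K L : R)
    (hpeak : a ^ 2 * K * L = t) (hsum : t + 1 = a * L + a) :
    ∑ σ ∈ derangements321 n, q ^ inv σ * t ^ exc σ =
      a ^ n * ∑ σ ∈ derangements321 n, q ^ inv σ * K ^ cpk σ * L ^ exc σ := by
  calc ∑ σ ∈ derangements321 n, q ^ inv σ * t ^ exc σ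
      = ∑ σ ∈ derangements321 n, q ^ inv σ * t ^ cpk σ * t ^ cda σ * 1 ^ cdd σ :=
        sum_congr rfl fun σ hσ => by
          rw [exc_eq_cpk_add_cda (mem_derangements321.mp hσ).1]; ring
    _ = ∑ σ ∈ derangements321 n, q ^ inv σ * t ^ cpk σ * (a * L) ^ cda σ * a ^ cdd σ :=
        sum_derangements321_eq_of_add_eq q t hsum
    _ = a ^ n * ∑ σ ∈ derangements321 n, q ^ inv σ * K ^ cpk σ * L ^ exc σ := by
        rw [mul_sum]
        refine sum_congr rfl fun σ hσ => ?_
        have hd := (mem_derangements321.mp hσ).1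
        rw [← hpeak, show a ^ n = a ^ (exc σ + cpk σ + cdd σ) by rw [exc_add_cpk_add_cdd hd],
          exc_eq_cpk_add_cda hd]
        ring

theorem stmt7_general (n : ℕ) (q x t : ℝ) (h : (1 + x) * (x + t) * (1 + x * t) ≠ 0) :
    ∑ σ ∈ Finset.univ.filter
        (fun σ : Equiv.Perm (Fin n) => IsDerangement σ ∧ Avoids321 σ),
        q ^ inv σ * t ^ exc σ =
      ((1 + x * t) / (1 + x)) ^ n *
        ∑ σ ∈ Finset.univ.filter
            (fun σ : Equiv.Perm (Fin n) => IsDerangement σ ∧ Avoids321 σ),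
          q ^ inv σ * ((1 + x) ^ 2 * t / ((x + t) * (1 + x * t))) ^ cpk σ * ((x + t) / (1 + x * t)) ^ exc σ := by
  obtain ⟨⟨hx, hxt⟩, hxt'⟩ : ((1 + x ≠ 0) ∧ x + t ≠ 0) ∧ 1 + x * t ≠ 0 := by
    simpa [not_or] using h
  refine sum_derangements321_inv_exc_eq q t _ _ _ (by field_simp) ?_
  rw [div_mul_div_comm, mul_comm (1 + x * t), mul_div_mul_right _ _ hxt']
  field_simp
  ring

theorem stmt7 (n : ℕ) (hn : 1 ≤ n) (q x t : ℝ) (h : (1 + x) * (x + t) * (1 + x * t) ≠ 0) :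
    ∑ σ ∈ Finset.univ.filter
        (fun σ : Equiv.Perm (Fin n) => IsDerangement σ ∧ Avoids321 σ),
        q ^ inv σ * t ^ exc σ =
      ((1 + x * t) / (1 + x)) ^ n *
        ∑ σ ∈ Finset.univ.filter
            (fun σ : Equiv.Perm (Fin n) => IsDerangement σ ∧ Avoids321 σ),
          q ^ inv σ * ((1 + x) ^ 2 * t / ((x + t) * (1 + x * t))) ^ cpk σ * ((x + t) / (1 + x * t)) ^ exc σ :=
  stmt7_general n q x t h

end EulerExc
end
end

section
/- For every integer n ≥ 1 and all real numbers q, x, t with (1+x)(x+t)(1+xt) ≠ 0, one has Σ_{σ∈D_n} q^{cyc σ} t^{exc σ} = ((1+xt)/(1+x))^{n} · Σ_{σ∈D_n} q^{cyc σ} · ((1+x)² t/((x+t)(1+xt)))^{cpk σ} · ((x+t)/(1+xt))^{exc σ}. -/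
open Finset

open scoped Classical

noncomputable section

namespace EulerExc

variable {n : ℕ}

/-!
For a derangement every letter is a cyclic peak, valley, double ascent or double descent, there
are as many peaks as valleys, and the excedances are the valleys and the double ascents. So both
sides are values of `F(u, v) = ∑_{σ ∈ D_n} q^cyc t^cval u^cda v^cdd`: the left side at `(t, 1)`,
the right side at `((x + t)/(1 + x), (1 + x t)/(1 + x))`, two points of the line `u + v = 1 + t`.

`F` is constant on these lines because `∂F/∂u = ∂F/∂v`. Indeed, moving a cyclic double ascent `x`
forward in its cycle, to just before the first later letter smaller than `x`, makes `x` a cyclic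
double descent and changes neither the cycles nor the type of any other letter; and this is a
bijection between pairs (derangement, double ascent) and pairs (derangement, double descent).
-/

section CycleFactors

open Equiv Perm

variable {α : Type*} [Fintype α] [DecidableEq α] {σ τ : Perm α} {x : α}

lemma mem_erase_cycleOf_iff {c : Perm α} (hx : x ∈ σ.support) :
    c ∈ σ.cycleFactorsFinset.erase (σ.cycleOf x) ↔ c ∈ σ.cycleFactorsFinset ∧ x ∉ c.support := by
  rw [mem_erase]
  refine ⟨fun ⟨hcx, hc⟩ => ⟨hc, fun h => hcx (cycle_is_cycleOf h hc)⟩, fun ⟨hc, hxc⟩ => ⟨?_, hc⟩⟩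
  rintro rfl
  exact hxc (mem_support_cycleOf_iff.2 ⟨SameCycle.refl _ _, hx⟩)

lemma mem_cycleFactorsFinset_of_notMem_support {c : Perm α} (hc : c ∈ σ.cycleFactorsFinset)
    (hxc : x ∉ c.support) (hσx : x ∈ σ.support) (hτ : ∀ y, ¬σ.SameCycle x y → τ y = σ y) :
    c ∈ τ.cycleFactorsFinset := by
  have hdisj : c.Disjoint (σ.cycleOf x) := cycleFactorsFinset_pairwise_disjoint σ hc
    (cycleOf_mem_cycleFactorsFinset_iff.2 hσx)
    (mem_erase.1 ((mem_erase_cycleOf_iff hσx).2 ⟨hc, hxc⟩)).1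
  rw [mem_cycleFactorsFinset_iff] at hc ⊢
  refine ⟨hc.1, fun y hy => ?_⟩
  have hyx : ¬σ.SameCycle x y := fun h =>
    hdisj.disjoint_support.notMem_of_mem_left_finset hy (mem_support_cycleOf_iff.2 ⟨h, hσx⟩)
  rw [hc.2 y hy, hτ y hyx]

lemma card_cycleFactorsFinset_eq_of_eq_off_sameCycle (hσx : x ∈ σ.support)
    (hτx : x ∈ τ.support) (hσ : ∀ y, ¬σ.SameCycle x y → τ y = σ y)
    (hτ : ∀ y, ¬τ.SameCycle x y → τ y = σ y) :
    #τ.cycleFactorsFinset = #σ.cycleFactorsFinset := by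
  have herase : τ.cycleFactorsFinset.erase (τ.cycleOf x) =
      σ.cycleFactorsFinset.erase (σ.cycleOf x) := by
    ext c
    rw [mem_erase_cycleOf_iff hσx, mem_erase_cycleOf_iff hτx]
    exact ⟨fun ⟨hc, hxc⟩ => ⟨mem_cycleFactorsFinset_of_notMem_support hc hxc hτx
      fun y hy => (hτ y hy).symm, hxc⟩,
      fun ⟨hc, hxc⟩ => ⟨mem_cycleFactorsFinset_of_notMem_support hc hxc hσx hσ, hxc⟩⟩
  rw [← card_erase_add_one (cycleOf_mem_cycleFactorsFinset_iff.2 hτx),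
    ← card_erase_add_one (cycleOf_mem_cycleFactorsFinset_iff.2 hσx), herase]

end CycleFactors

section Hop

open Equiv

lemma perm_apply_inv_self {α : Type*} (f : Perm α) (y : α) : f (f⁻¹ y) = y :=
  f.apply_symm_apply y

lemma perm_inv_apply_self {α : Type*} (f : Perm α) (y : α) : f⁻¹ (f y) = y :=
  f.symm_apply_apply y

variable {α : Type*} [LinearOrder α] [Finite α] (σ : Perm α) (x : α)

lemma exists_pos_pow_apply_le : ∃ j, 0 < j ∧ (σ ^ j) x ≤ x :=
  ⟨orderOf σ, orderOf_pos σ, by rw [pow_orderOf_eq_one, Perm.one_apply]⟩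

def returnTime : ℕ := Nat.find (exists_pos_pow_apply_le σ x)

def hopTarget : α := (σ ^ (returnTime σ x - 1)) x

/-- Moves `x` forward along its cycle, from between `σ⁻¹ x` and `σ x` to between
`hopTarget σ x` and its successor, the first point of the cycle after `x` lying below `x`. -/
def hop : Perm α := σ * swap (σ⁻¹ x) x * swap x (hopTarget σ x)

variable {σ x}

lemma returnTime_pos : 0 < returnTime σ x :=
  (Nat.find_spec (exists_pos_pow_apply_le σ x)).1

lemma pow_returnTime_apply_le : (σ ^ returnTime σ x) x ≤ x :=
  (Nat.find_spec (exists_pos_pow_apply_le σ x)).2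

lemma lt_pow_apply_of_lt_returnTime {i : ℕ} (hi : 0 < i) (hij : i < returnTime σ x) :
    x < (σ ^ i) x :=
  not_le.1 fun h => Nat.find_min (exists_pos_pow_apply_le σ x) hij ⟨hi, h⟩

lemma returnTime_eq {j : ℕ} (hj : 0 < j) (hle : (σ ^ j) x ≤ x)
    (hlt : ∀ i, 0 < i → i < j → x < (σ ^ i) x) : returnTime σ x = j :=
  (Nat.find_eq_iff _).2 ⟨⟨hj, hle⟩, fun i hij ⟨hi, h⟩ => (hlt i hi hij).not_ge h⟩

lemma pow_apply_ne_pow_apply {i k : ℕ} (hik : i < k) (hk : k < returnTime σ x) :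
    (σ ^ i) x ≠ (σ ^ k) x := by
  intro h
  have : (σ ^ (k - i)) x = x := by
    apply (σ ^ i).injective
    rw [← Perm.mul_apply, ← pow_add, Nat.add_sub_cancel' hik.le, h]
  exact (lt_pow_apply_of_lt_returnTime (by omega) (by omega)).ne' this

lemma apply_hopTarget : σ (hopTarget σ x) = (σ ^ returnTime σ x) x := by
  rw [hopTarget, ← Perm.mul_apply, ← pow_succ', Nat.sub_add_cancel returnTime_pos]

lemma sameCycle_hopTarget : σ.SameCycle x (hopTarget σ x) :=
  ⟨(returnTime σ x - 1 : ℕ), by rw [zpow_natCast, hopTarget]⟩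

variable (hx₁ : σ⁻¹ x < x) (hx₂ : x < σ x)
include hx₂

lemma one_lt_returnTime : 1 < returnTime σ x := by
  refine lt_of_le_of_ne returnTime_pos fun h => hx₂.not_ge ?_
  simpa [← h] using pow_returnTime_apply_le (σ := σ) (x := x)

lemma lt_hopTarget : x < hopTarget σ x :=
  lt_pow_apply_of_lt_returnTime (by have := one_lt_returnTime hx₂; omega)
    (Nat.sub_lt returnTime_pos one_pos)

include hx₁

lemma pow_returnTime_apply_lt : (σ ^ returnTime σ x) x < x := by
  refine pow_returnTime_apply_le.lt_of_ne fun h => ?_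
  have hc : hopTarget σ x = σ⁻¹ x := by
    rw [Perm.eq_inv_iff_eq, apply_hopTarget, h]
  exact (hx₁.trans (lt_hopTarget hx₂)).ne' hc

lemma apply_hopTarget_lt : σ (hopTarget σ x) < x :=
  apply_hopTarget (σ := σ) ▸ pow_returnTime_apply_lt hx₁ hx₂

omit hx₁ hx₂

lemma hop_apply_of_ne {y : α} (h₁ : y ≠ σ⁻¹ x) (h₂ : y ≠ x) (h₃ : y ≠ hopTarget σ x) :
    hop σ x y = σ y := by
  rw [hop, Perm.mul_apply, Perm.mul_apply, swap_apply_of_ne_of_ne h₂ h₃,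
    swap_apply_of_ne_of_ne h₁ h₂]

lemma hop_apply_hopTarget : hop σ x (hopTarget σ x) = x := by
  simp [hop]

lemma hop_inv_apply_self : (hop σ x)⁻¹ x = hopTarget σ x :=
  Perm.inv_eq_iff_eq.2 hop_apply_hopTarget.symm

include hx₁ hx₂

lemma hop_apply_inv_self : hop σ x (σ⁻¹ x) = σ x := by
  rw [hop, Perm.mul_apply, Perm.mul_apply, swap_apply_of_ne_of_ne hx₁.ne
    (hx₁.trans (lt_hopTarget hx₂)).ne, swap_apply_left]

lemma hop_apply_self : hop σ x x = σ (hopTarget σ x) := by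
  rw [hop, Perm.mul_apply, Perm.mul_apply, swap_apply_left,
    swap_apply_of_ne_of_ne (hx₁.trans (lt_hopTarget hx₂)).ne' (lt_hopTarget hx₂).ne']

lemma compare_hop_apply {y : α} (hy : y ≠ x) : compare (hop σ x y) y = compare (σ y) y := by
  have hc := lt_hopTarget hx₂
  by_cases ha : y = σ⁻¹ x
  · subst ha
    rw [hop_apply_inv_self hx₁ hx₂, perm_apply_inv_self, compare_gt_iff_gt.2 (hx₁.trans hx₂),
      compare_gt_iff_gt.2 hx₁]
  by_cases hb : y = hopTarget σ x
  · subst hb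
    rw [hop_apply_hopTarget, compare_lt_iff_lt.2 hc,
      compare_lt_iff_lt.2 ((apply_hopTarget_lt hx₁ hx₂).trans hc)]
  rw [hop_apply_of_ne ha hy hb]

lemma compare_hop_inv_apply {y : α} (hy : y ≠ x) :
    compare ((hop σ x)⁻¹ y) y = compare (σ⁻¹ y) y := by
  obtain ⟨z, rfl⟩ := (hop σ x).surjective y
  rw [perm_inv_apply_self]
  by_cases ha : z = σ⁻¹ x
  · subst ha
    rw [hop_apply_inv_self hx₁ hx₂, perm_inv_apply_self, compare_lt_iff_lt.2 (hx₁.trans hx₂),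
      compare_lt_iff_lt.2 hx₂]
  by_cases hzx : z = x
  · subst hzx
    have hd := apply_hopTarget_lt hx₁ hx₂
    rw [hop_apply_self hx₁ hx₂, perm_inv_apply_self, compare_gt_iff_gt.2 hd,
      compare_gt_iff_gt.2 (hd.trans (lt_hopTarget hx₂))]
  by_cases hc : z = hopTarget σ x
  · exact absurd (hc ▸ hop_apply_hopTarget) hy
  rw [hop_apply_of_ne ha hzx hc, perm_inv_apply_self]

lemma hop_apply_self_lt : hop σ x x < x :=
  hop_apply_self hx₁ hx₂ ▸ apply_hopTarget_lt hx₁ hx₂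

omit hx₁ in
lemma lt_hop_inv_apply_self : x < (hop σ x)⁻¹ x :=
  hop_inv_apply_self (σ := σ) ▸ lt_hopTarget hx₂

lemma hop_apply_lt_iff {y : α} (hy : y ≠ x) : hop σ x y < y ↔ σ y < y := by
  rw [← compare_lt_iff_lt, compare_hop_apply hx₁ hx₂ hy, compare_lt_iff_lt]

lemma lt_hop_apply_iff {y : α} (hy : y ≠ x) : y < hop σ x y ↔ y < σ y := by
  rw [← compare_gt_iff_gt, compare_hop_apply hx₁ hx₂ hy, compare_gt_iff_gt]

lemma hop_apply_eq_self_iff {y : α} (hy : y ≠ x) : hop σ x y = y ↔ σ y = y := by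
  rw [← compare_eq_iff_eq, compare_hop_apply hx₁ hx₂ hy, compare_eq_iff_eq]

lemma hop_inv_apply_lt_iff {y : α} (hy : y ≠ x) : (hop σ x)⁻¹ y < y ↔ σ⁻¹ y < y := by
  rw [← compare_lt_iff_lt, compare_hop_inv_apply hx₁ hx₂ hy, compare_lt_iff_lt]

lemma lt_hop_inv_apply_iff {y : α} (hy : y ≠ x) : y < (hop σ x)⁻¹ y ↔ y < σ⁻¹ y := by
  rw [← compare_gt_iff_gt, compare_hop_inv_apply hx₁ hx₂ hy, compare_gt_iff_gt]

omit hx₂ in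
lemma hop_inv_pow_apply {m : ℕ} (hm : 0 < m) (hmj : m < returnTime σ x) :
    ((hop σ x)⁻¹ ^ m) x = (σ ^ (returnTime σ x - m)) x := by
  induction m with
  | zero => omega
  | succ m ih =>
    rcases Nat.eq_zero_or_pos m with rfl | hm0
    · rw [zero_add, pow_one, Perm.inv_eq_iff_eq]
      exact hop_apply_hopTarget.symm
    rw [pow_succ', Perm.mul_apply, ih hm0 (by omega), Perm.inv_eq_iff_eq]
    have hy := lt_pow_apply_of_lt_returnTime (σ := σ) (x := x)
      (i := returnTime σ x - (m + 1)) (by omega) (by omega)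
    rw [hop_apply_of_ne (hx₁.trans hy).ne' hy.ne' (pow_apply_ne_pow_apply (by omega) (by omega)),
      ← Perm.mul_apply, ← pow_succ']
    congr 2
    omega

lemma hop_inv_pow_returnTime_apply : ((hop σ x)⁻¹ ^ returnTime σ x) x = σ⁻¹ x := by
  have hj := one_lt_returnTime hx₂
  have h := hop_inv_pow_apply hx₁ (m := returnTime σ x - 1) (by omega) (by omega)
  rw [Nat.sub_sub_self hj.le, pow_one] at h
  rw [← Nat.sub_add_cancel hj.le, pow_succ', Perm.mul_apply, h, Perm.inv_eq_iff_eq,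
    hop_apply_inv_self hx₁ hx₂]

lemma returnTime_hop_inv : returnTime (hop σ x)⁻¹ x = returnTime σ x :=
  returnTime_eq returnTime_pos (by rw [hop_inv_pow_returnTime_apply hx₁ hx₂]; exact hx₁.le)
    fun i hi hij => by
      rw [hop_inv_pow_apply hx₁ hi hij]
      exact lt_pow_apply_of_lt_returnTime (by omega) (by omega)

lemma hopTarget_hop_inv : hopTarget (hop σ x)⁻¹ x = σ x := by
  have hj := one_lt_returnTime hx₂
  rw [hopTarget, returnTime_hop_inv hx₁ hx₂, hop_inv_pow_apply hx₁ (by omega) (by omega),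
    Nat.sub_sub_self hj.le, pow_one]

lemma hop_hop_inv : hop (hop σ x)⁻¹ x = σ⁻¹ := by
  set ρ := (hop σ x)⁻¹
  have hρ₁ : ρ⁻¹ x = σ (hopTarget σ x) := by rw [inv_inv, hop_apply_self hx₁ hx₂]
  have hρ₂ : ρ x = hopTarget σ x := hop_inv_apply_self
  have hρ₃ : hopTarget ρ x = σ x := hopTarget_hop_inv hx₁ hx₂
  have hρx₁ : ρ⁻¹ x < x := hρ₁ ▸ apply_hopTarget_lt hx₁ hx₂
  have hρx₂ : x < ρ x := hρ₂ ▸ lt_hopTarget hx₂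
  ext y
  by_cases h₁ : y = ρ⁻¹ x
  · rw [h₁, hop_apply_inv_self hρx₁ hρx₂, hρ₁, hρ₂, perm_inv_apply_self]
  by_cases h₂ : y = x
  · rw [h₂, hop_apply_self hρx₁ hρx₂, hρ₃, Perm.inv_eq_iff_eq, hop_apply_inv_self hx₁ hx₂]
  by_cases h₃ : y = hopTarget ρ x
  · rw [h₃, hop_apply_hopTarget, hρ₃, perm_inv_apply_self]
  rw [hop_apply_of_ne h₁ h₂ h₃, Perm.inv_eq_iff_eq, hop_apply_of_ne, perm_apply_inv_self]
  · exact fun h => h₂ (σ⁻¹.injective h)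
  · exact fun h => h₃ (by rw [hρ₃, ← h, perm_apply_inv_self])
  · exact fun h => h₁ (by rw [hρ₁, ← h, perm_apply_inv_self])

lemma sameCycle_hop_inv_self : (hop σ x).SameCycle x (σ⁻¹ x) :=
  Perm.sameCycle_inv.1 ⟨returnTime σ x, by rw [zpow_natCast, hop_inv_pow_returnTime_apply hx₁ hx₂]⟩

omit hx₁ hx₂ in
lemma hop_apply_of_not_sameCycle {y : α} (h : ¬σ.SameCycle x y) : hop σ x y = σ y :=
  hop_apply_of_ne (fun e => h (e ▸ ⟨-1, by simp⟩)) (fun e => h (e ▸ Perm.SameCycle.refl _ _))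
    (fun e => h (e ▸ sameCycle_hopTarget))

lemma hop_apply_of_not_sameCycle_hop {y : α} (h : ¬(hop σ x).SameCycle x y) :
    hop σ x y = σ y :=
  hop_apply_of_ne (fun e => h (e ▸ sameCycle_hop_inv_self hx₁ hx₂))
    (fun e => h (e ▸ Perm.SameCycle.refl _ _))
    (fun e => h (e ▸ Perm.sameCycle_apply_right.1
      (hop_apply_hopTarget (σ := σ) ▸ Perm.SameCycle.refl _ _)))

lemma card_cycleFactorsFinset_hop [Fintype α] :
    #(hop σ x).cycleFactorsFinset = #σ.cycleFactorsFinset :=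
  card_cycleFactorsFinset_eq_of_eq_off_sameCycle (Perm.mem_support.2 hx₂.ne')
    (Perm.mem_support.2 (hop_apply_self hx₁ hx₂ ▸ (apply_hopTarget_lt hx₁ hx₂).ne))
    (fun _ => hop_apply_of_not_sameCycle) (fun _ => hop_apply_of_not_sameCycle_hop hx₁ hx₂)

end Hop

section Statistics

open Equiv

variable {σ : Perm (Fin n)} {x : Fin n}

lemma isDerangement_iff_fixc_eq_zero : IsDerangement σ ↔ fixc σ = 0 := by
  simp [IsDerangement, fixc, filter_eq_empty_iff]

lemma IsDerangement.inv (hD : IsDerangement σ) : IsDerangement σ⁻¹ :=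
  fun y h => hD y (Perm.inv_eq_iff_eq.1 h).symm

lemma IsDerangement.not_apply_lt_iff (hD : IsDerangement σ) (y : Fin n) :
    ¬σ y < y ↔ y < σ y :=
  not_lt.trans (hD y).symm.le_iff_lt

lemma card_filter_eq_add_card_filter_and_not {α : Type*} (s : Finset α) (p q : α → Prop)
    [DecidablePred p] [DecidablePred q] :
    #(s.filter p) = #(s.filter fun a => p a ∧ q a) + #(s.filter fun a => p a ∧ ¬q a) := by
  rw [← filter_filter, ← filter_filter, card_filter_add_card_filter_not]

lemma card_filter_inv_apply_lt : #(univ.filter fun y => σ⁻¹ y < y) = exc σ :=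
  card_nbij' (fun y => σ⁻¹ y) (fun y => σ y)
    (fun y hy => by simpa [perm_apply_inv_self] using hy)
    (fun y hy => by simpa [perm_inv_apply_self] using hy)
    (fun y _ => perm_apply_inv_self σ y) (fun y _ => perm_inv_apply_self σ y)

section Derangement

variable (hD : IsDerangement σ)
include hD

lemma card_filter_inv_apply_lt_eq_cpk_add_cda :
    #(univ.filter fun y => σ⁻¹ y < y) = cpk σ + cda σ := by
  rw [card_filter_eq_add_card_filter_and_not _ _ fun y => σ y < y, cpk, cda]
  simp only [hD.not_apply_lt_iff]

lemma card_filter_not_inv_apply_lt_eq_cdd_add_cval :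
    #(univ.filter fun y => ¬σ⁻¹ y < y) = cdd σ + cval σ := by
  rw [card_filter_eq_add_card_filter_and_not _ _ fun y => σ y < y, cdd, cval]
  simp only [hD.not_apply_lt_iff, hD.inv.not_apply_lt_iff]

lemma exc_eq_cda_add_cval : exc σ = cda σ + cval σ := by
  rw [exc, card_filter_eq_add_card_filter_and_not _ _ fun y => σ⁻¹ y < y, cda, cval]
  simp only [hD.inv.not_apply_lt_iff, and_comm]

lemma cpk_eq_cval : cpk σ = cval σ := by
  have := card_filter_inv_apply_lt_eq_cpk_add_cda hD
  have := exc_eq_cda_add_cval hD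
  have := card_filter_inv_apply_lt (σ := σ)
  omega

lemma cpk_add_cda_add_cdd_add_cval : cpk σ + cda σ + cdd σ + cval σ = n := by
  have := card_filter_add_card_filter_not (s := univ) fun y => σ⁻¹ y < y
  rw [card_filter_inv_apply_lt_eq_cpk_add_cda hD, card_filter_not_inv_apply_lt_eq_cdd_add_cval hD,
    card_univ, Fintype.card_fin] at this
  omega

lemma pow_mul_pow_cpk_mul_pow_exc (C A B : ℝ) :
    C ^ n * (A ^ cpk σ * B ^ exc σ) = (C * C * A * B) ^ cval σ * (C * B) ^ cda σ * C ^ cdd σ := by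
  have hn : C ^ n = C ^ cval σ * C ^ cval σ * C ^ cda σ * C ^ cdd σ := by
    rw [← pow_add, ← pow_add, ← pow_add]
    have := cpk_add_cda_add_cdd_add_cval hD
    rw [cpk_eq_cval hD] at this
    congr 1
    omega
  rw [hn, cpk_eq_cval hD, exc_eq_cda_add_cval hD]
  ring

end Derangement

section DoubleAscent

variable (hx₁ : σ⁻¹ x < x) (hx₂ : x < σ x)
include hx₁ hx₂

lemma fixc_hop : fixc (hop σ x) = fixc σ := by
  unfold fixc
  congr 1
  ext y
  simp only [mem_filter, mem_univ, true_and]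
  rcases eq_or_ne y x with rfl | hy
  · exact iff_of_false (hop_apply_self_lt hx₁ hx₂).ne hx₂.ne'
  · exact hop_apply_eq_self_iff hx₁ hx₂ hy

lemma IsDerangement.hop (hD : IsDerangement σ) : IsDerangement (hop σ x) := by
  rw [isDerangement_iff_fixc_eq_zero, fixc_hop hx₁ hx₂, ← isDerangement_iff_fixc_eq_zero]
  exact hD

lemma cyc_hop : cyc (hop σ x) = cyc σ := by
  rw [cyc, cyc, fixc_hop hx₁ hx₂, Perm.cycleType_def, Perm.cycleType_def, Multiset.card_map,
    Multiset.card_map, card_val, card_val, card_cycleFactorsFinset_hop hx₁ hx₂]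

lemma cval_hop : cval (hop σ x) = cval σ := by
  unfold cval
  congr 1
  ext y
  simp only [mem_filter, mem_univ, true_and]
  rcases eq_or_ne y x with rfl | hy
  · exact iff_of_false (fun h => (hop_apply_self_lt hx₁ hx₂).not_gt h.2)
      fun h => hx₁.not_gt h.1
  · rw [lt_hop_inv_apply_iff hx₁ hx₂ hy, lt_hop_apply_iff hx₁ hx₂ hy]

lemma cda_hop_add_one : cda (hop σ x) + 1 = cda σ := by
  have hfilter : (univ.filter fun y => (hop σ x)⁻¹ y < y ∧ y < hop σ x y) =
      (univ.filter fun y => σ⁻¹ y < y ∧ y < σ y).erase x := by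
    ext y
    simp only [mem_filter, mem_univ, true_and, mem_erase]
    rcases eq_or_ne y x with rfl | hy
    · exact iff_of_false (fun h => (lt_hop_inv_apply_self hx₂).not_gt h.1) fun h => h.1 rfl
    · rw [hop_inv_apply_lt_iff hx₁ hx₂ hy, lt_hop_apply_iff hx₁ hx₂ hy, and_iff_right hy]
  rw [cda, cda, hfilter, card_erase_add_one (mem_filter.2 ⟨mem_univ _, hx₁, hx₂⟩)]

lemma cdd_hop : cdd (hop σ x) = cdd σ + 1 := by
  have hfilter : (univ.filter fun y => y < (hop σ x)⁻¹ y ∧ hop σ x y < y) =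
      insert x (univ.filter fun y => y < σ⁻¹ y ∧ σ y < y) := by
    ext y
    simp only [mem_filter, mem_univ, true_and, mem_insert]
    rcases eq_or_ne y x with rfl | hy
    · exact iff_of_true ⟨lt_hop_inv_apply_self hx₂, hop_apply_self_lt hx₁ hx₂⟩ (Or.inl rfl)
    · rw [lt_hop_inv_apply_iff hx₁ hx₂ hy, hop_apply_lt_iff hx₁ hx₂ hy, or_iff_right hy]
  rw [cdd, cdd, hfilter, card_insert_of_notMem fun h => hx₁.not_gt (mem_filter.1 h).2.1]

end DoubleAscent

end Statistics

section GeneratingFunction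

open Equiv

variable (n)

def derangementPoly (q t u v : ℝ) : ℝ :=
  ∑ σ ∈ univ.filter (fun σ : Perm (Fin n) => IsDerangement σ),
    q ^ cyc σ * t ^ cval σ * u ^ cda σ * v ^ cdd σ

/-- Both sides sum over pairs `(σ, x)` with `x` a cyclic double ascent, resp. double descent, of
`σ`; these are matched by `(σ, x) ↦ (hop σ x, x)`. -/
lemma sum_cda_mul_eq_sum_cdd_mul (q t u v : ℝ) :
    ∑ σ ∈ univ.filter (fun σ : Perm (Fin n) => IsDerangement σ),
      (cda σ : ℝ) * (q ^ cyc σ * t ^ cval σ * u ^ (cda σ - 1) * v ^ cdd σ) =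
    ∑ σ ∈ univ.filter (fun σ : Perm (Fin n) => IsDerangement σ),
      (cdd σ : ℝ) * (q ^ cyc σ * t ^ cval σ * u ^ cda σ * v ^ (cdd σ - 1)) := by
  have hsigma (s : Perm (Fin n) → Finset (Fin n)) (g : Perm (Fin n) → ℝ) :
      ∑ σ ∈ univ.filter (fun σ : Perm (Fin n) => IsDerangement σ), (#(s σ) : ℝ) * g σ =
        ∑ p ∈ (univ.filter fun σ : Perm (Fin n) => IsDerangement σ).sigma s, g p.1 := by
    simp only [sum_sigma, sum_const, nsmul_eq_mul]
  refine (hsigma (fun σ => univ.filter fun y => σ⁻¹ y < y ∧ y < σ y)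
    (fun σ => q ^ cyc σ * t ^ cval σ * u ^ (cda σ - 1) * v ^ cdd σ)).trans
    (Eq.trans ?_ (hsigma (fun σ => univ.filter fun y => y < σ⁻¹ y ∧ σ y < y)
      (fun σ => q ^ cyc σ * t ^ cval σ * u ^ cda σ * v ^ (cdd σ - 1))).symm)
  refine sum_nbij' (fun p => ⟨hop p.1 p.2, p.2⟩) (fun p => ⟨(hop p.1⁻¹ p.2)⁻¹, p.2⟩)
    ?_ ?_ ?_ ?_ ?_
  all_goals
    rintro ⟨σ, x⟩ hp
    simp only [mem_sigma, mem_filter, mem_univ, true_and] at hp ⊢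
    obtain ⟨hD, hx₁, hx₂⟩ := hp
  · exact ⟨hD.hop hx₁ hx₂, lt_hop_inv_apply_self hx₂, hop_apply_self_lt hx₁ hx₂⟩
  · have hx₁' : σ⁻¹⁻¹ x < x := by rwa [inv_inv]
    refine ⟨(hD.inv.hop hx₁' hx₁).inv, ?_, lt_hop_inv_apply_self hx₁⟩
    rw [inv_inv]
    exact hop_apply_self_lt hx₁' hx₁
  · rw [hop_hop_inv hx₁ hx₂, inv_inv]
  · rw [hop_hop_inv (by rwa [inv_inv]) hx₁, inv_inv]
  · rw [cyc_hop hx₁ hx₂, cval_hop hx₁ hx₂, cdd_hop hx₁ hx₂, ← cda_hop_add_one hx₁ hx₂,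
      Nat.add_sub_cancel, Nat.add_sub_cancel]

lemma derangementPoly_add_sub (q t u v s : ℝ) :
    derangementPoly n q t (u + s) (v - s) = derangementPoly n q t u v := by
  have hderiv (r : ℝ) : HasDerivAt (fun s => derangementPoly n q t (u + s) (v - s)) 0 r := by
    have hterm (σ : Perm (Fin n)) : HasDerivAt
        (fun s => q ^ cyc σ * t ^ cval σ * (u + s) ^ cda σ * (v - s) ^ cdd σ)
        ((cda σ : ℝ) * (q ^ cyc σ * t ^ cval σ * (u + r) ^ (cda σ - 1) * (v - r) ^ cdd σ) -
          (cdd σ : ℝ) * (q ^ cyc σ * t ^ cval σ * (u + r) ^ cda σ * (v - r) ^ (cdd σ - 1))) r := by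
      have hu := (((hasDerivAt_id r).const_add u).fun_pow (cda σ)).const_mul
        (q ^ cyc σ * t ^ cval σ)
      have hv := ((hasDerivAt_id r).const_sub v).fun_pow (cdd σ)
      refine (hu.fun_mul hv).congr_deriv ?_
      simp only [id]
      ring
    have := HasDerivAt.fun_sum (u := univ.filter fun σ : Perm (Fin n) => IsDerangement σ)
      fun σ _ => hterm σ
    rwa [sum_sub_distrib, sum_cda_mul_eq_sum_cdd_mul, sub_self] at this
  have := is_const_of_deriv_eq_zero (fun r => (hderiv r).differentiableAt)
    (fun r => (hderiv r).deriv) s 0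
  simpa using this

end GeneratingFunction

theorem stmt8_general (n : ℕ) (q x t : ℝ) (h : (1 + x) * (x + t) * (1 + x * t) ≠ 0) :
    ∑ σ ∈ Finset.univ.filter (fun σ : Equiv.Perm (Fin n) => IsDerangement σ),
        q ^ cyc σ * t ^ exc σ =
      ((1 + x * t) / (1 + x)) ^ n *
        ∑ σ ∈ Finset.univ.filter (fun σ : Equiv.Perm (Fin n) => IsDerangement σ),
          q ^ cyc σ * ((1 + x) ^ 2 * t / ((x + t) * (1 + x * t))) ^ cpk σ * ((x + t) / (1 + x * t)) ^ exc σ := by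
  obtain ⟨⟨h₁, h₂⟩, h₃⟩ := mul_ne_zero_iff.1 h |>.imp_left mul_ne_zero_iff.1
  have hC : (1 + x * t) / (1 + x) = 1 - x * (1 - t) / (1 + x) := by
    field_simp
    ring
  have hCB : (1 + x * t) / (1 + x) * ((x + t) / (1 + x * t)) = t + x * (1 - t) / (1 + x) := by
    field_simp
    ring
  have hCCAB : (1 + x * t) / (1 + x) * ((1 + x * t) / (1 + x)) *
      ((1 + x) ^ 2 * t / ((x + t) * (1 + x * t))) * ((x + t) / (1 + x * t)) = t := by
    field_simp
  calc _ = derangementPoly n q t t 1 := sum_congr rfl fun σ hσ => by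
        rw [exc_eq_cda_add_cval (mem_filter.1 hσ).2]
        ring
    _ = derangementPoly n q t (t + x * (1 - t) / (1 + x)) (1 - x * (1 - t) / (1 + x)) :=
        (derangementPoly_add_sub n q t t 1 _).symm
    _ = _ := by
        rw [derangementPoly, mul_sum]
        refine sum_congr rfl fun σ hσ => ?_
        rw [mul_assoc (q ^ cyc σ) (_ ^ cpk σ), mul_left_comm (_ ^ n),
          pow_mul_pow_cpk_mul_pow_exc (mem_filter.1 hσ).2,
          hCCAB, hCB, ← hC]
        ring

theorem stmt8 (n : ℕ) (hn : 1 ≤ n) (q x t : ℝ) (h : (1 + x) * (x + t) * (1 + x * t) ≠ 0) :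
    ∑ σ ∈ Finset.univ.filter (fun σ : Equiv.Perm (Fin n) => IsDerangement σ),
        q ^ cyc σ * t ^ exc σ =
      ((1 + x * t) / (1 + x)) ^ n *
        ∑ σ ∈ Finset.univ.filter (fun σ : Equiv.Perm (Fin n) => IsDerangement σ),
          q ^ cyc σ * ((1 + x) ^ 2 * t / ((x + t) * (1 + x * t))) ^ cpk σ * ((x + t) / (1 + x * t)) ^ exc σ :=
  stmt8_general n q x t h

end EulerExc
end
end
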